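/- arXiv:1602.00935 — 5 statements merged into one kernel-verified Lean document; each statement's English description precedes it below -/
import Mathlib

section
/- For every n ≥ 2 and every non-bijective transformation α of {1,…,n}, the minimal length ℓ(K_n, α) of a product of arcs of the complete digraph K_n equal to α satisfies ℓ(K_n, α) = n + cycl(α) − fix(α). -/
noncomputable section

variable {V : Type*}

/-- The arc `(a→b)`: the map sending `a` to `b` and fixing every other point. -/
def arcMap [DecidableEq V] (a b : V) : V → V := fun x => if x = a then b else x

/-- Evaluate a word of arcs, applying the arcs from left to right. -/
def wordEval [DecidableEq V] (w : List (V × V)) : V → V :=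
  fun x => w.foldl (fun y e => arcMap e.1 e.2 y) x

/-- `α ∈ ⟨D⟩`: `α` is a (nonempty) product of arcs of the digraph `D`. -/
def InGen [DecidableEq V] (D : V → V → Prop) (α : V → V) : Prop :=
  ∃ w : List (V × V), w ≠ [] ∧ (∀ e ∈ w, D e.1 e.2) ∧ wordEval w = α

/-- `ℓ(D, α)`: the minimal length of a word in the arcs of `D` expressing `α`. -/
def arcLen [DecidableEq V] (D : V → V → Prop) (α : V → V) : ℕ :=
  sInf {k | ∃ w : List (V × V), w.length = k ∧ (∀ e ∈ w, D e.1 e.2) ∧ wordEval w = α}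

/-- `fix(α)`: the number of fixed points of `α`. -/
def fixCnt (α : V → V) : ℕ := Set.ncard {x | α x = x}

/-- `rk(α)`: the rank of `α`, i.e. the cardinality of its image. -/
def rnk (α : V → V) : ℕ := Set.ncard (Set.range α)

/-- A set `C` is a cyclic orbit of `α` if it is a weakly connected component of the
functional digraph of `α` (edges `(x, α x)`) which is a directed cycle on at least two
vertices: equivalently, `C` is the forward orbit of a periodic point, has at least two
elements, and is closed under taking preimages. -/
def IsCyclicOrbit (α : V → V) (C : Set V) : Prop :=
  2 ≤ C.ncard ∧ (∃ x ∈ C, (∃ k, 0 < k ∧ α^[k] x = x) ∧ C = {y | ∃ k, α^[k] x = y}) ∧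
    ∀ y : V, α y ∈ C → y ∈ C

/-- `cycl(α)`: the number of cyclic orbits of `α`. -/
def cyclCnt (α : V → V) : ℕ := Set.ncard {C : Set V | IsCyclicOrbit α C}

/-- `D` is connected: any two vertices are joined by a directed path in some direction. -/
def ConnectedDigraph (D : V → V → Prop) : Prop :=
  ∀ u v : V, Relation.ReflTransGen D u v ∨ Relation.ReflTransGen D v u

/-- `D` is closed (equal to its closure): whenever `(b,a)` is an edge lying on a directed
cycle of `D` (i.e. there is a directed path from `a` back to `b`), `(a,b)` is also an edge. -/
def ClosedDigraph (D : V → V → Prop) : Prop :=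
  ∀ a b : V, D b a → Relation.ReflTransGen D a b → D a b

/-- Property (★): if `v0, v1, v2` is a directed path with `d_D(v0,v2) = 2`, then every
out-neighbour of `v1` and of `v2` lies in `{v0, v1, v2}`. -/
def StarCond (D : V → V → Prop) : Prop :=
  ∀ v0 v1 v2 : V, D v0 v1 → D v1 v2 → v0 ≠ v2 → ¬ D v0 v2 →
    ∀ u : V, (D v1 u ∨ D v2 u) → (u = v0 ∨ u = v1 ∨ u = v2)

/-- `C` is a strong component of `D`. -/
def IsSC (D : V → V → Prop) (C : Set V) : Prop :=
  ∃ v : V, C = {u | Relation.ReflTransGen D u v ∧ Relation.ReflTransGen D v u}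

/-- `C1` connects to `C2`: some edge goes from `C1` to `C2`. -/
def ConnectsTo (D : V → V → Prop) (C1 C2 : Set V) : Prop :=
  ∃ v1 ∈ C1, ∃ v2 ∈ C2, D v1 v2

/-- `C1` fully connects to `C2`: all pairs are edges. -/
def FullyConnects (D : V → V → Prop) (C1 C2 : Set V) : Prop :=
  ∀ v1 ∈ C1, ∀ v2 ∈ C2, D v1 v2

/-- A terminal strong component: it connects to no other strong component. -/
def IsTerminalSC (D : V → V → Prop) (C : Set V) : Prop :=
  IsSC D C ∧ ∀ C' : Set V, IsSC D C' → C' ≠ C → ¬ ConnectsTo D C C'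

/-- Property (★★): nonterminal strong components have at most 2 vertices and terminal
strong components have at most 3 vertices. -/
def StarStarCond (D : V → V → Prop) : Prop :=
  ∀ C : Set V, IsSC D C →
    (IsTerminalSC D C → C.ncard ≤ 3) ∧ (¬ IsTerminalSC D C → C.ncard ≤ 2)

/-- The induced subdigraph on `C` is an undirected path `a - b - c` on three vertices. -/
def IsP3 (D : V → V → Prop) (C : Set V) : Prop :=
  ∃ a b c : V, a ≠ b ∧ b ≠ c ∧ a ≠ c ∧ C = {a, b, c} ∧
    ∀ u ∈ C, ∀ w ∈ C,
      (D u w ↔ (u = a ∧ w = b) ∨ (u = b ∧ w = a) ∨ (u = b ∧ w = c) ∨ (u = c ∧ w = b))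

/-- `D` has a subdigraph isomorphic to `H`: an injection mapping edges of `H` to edges of `D`. -/
def HasSubdigraph (D : V → V → Prop) {m : ℕ} (H : Fin m → Fin m → Prop) : Prop :=
  ∃ f : Fin m → V, Function.Injective f ∧ ∀ i j : Fin m, H i j → D (f i) (f j)

/-- `Θ_k`: the directed cycle on `k` vertices. -/
def Theta (k : ℕ) : Fin k → Fin k → Prop := fun i j => (j : ℕ) = ((i : ℕ) + 1) % k

/-- `Γ1` (vertices relabelled from `{1,…,5}` to `{0,…,4}`). -/
def Gamma1 : Fin 5 → Fin 5 → Prop := fun i j =>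
  ((i : ℕ), (j : ℕ)) ∈ [(0,3),(3,0),(1,3),(3,1),(2,3),(3,2),(3,4)]

/-- `Γ2` (vertices relabelled from `{1,…,5}` to `{0,…,4}`). -/
def Gamma2 : Fin 5 → Fin 5 → Prop := fun i j =>
  ((i : ℕ), (j : ℕ)) ∈ [(0,2),(2,0),(1,2),(2,1),(2,3),(3,2),(3,4)]

/-- `Γ3` (vertices relabelled from `{1,…,4}` to `{0,…,3}`). -/
def Gamma3 : Fin 4 → Fin 4 → Prop := fun i j =>
  ((i : ℕ), (j : ℕ)) ∈ [(0,1),(1,2),(2,0),(2,3)]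

/-- `Γ4` (vertices relabelled from `{1,…,5}` to `{0,…,4}`). -/
def Gamma4 : Fin 5 → Fin 5 → Prop := fun i j =>
  ((i : ℕ), (j : ℕ)) ∈ [(0,1),(1,2),(2,3),(3,0),(3,4)]

/-- No subdigraph isomorphic to `Γ1`, `Γ2`, `Γ3`, `Γ4` or `Θ_k` for `k ≥ 5`. -/
def ForbiddenFree (D : V → V → Prop) : Prop :=
  ¬ HasSubdigraph D Gamma1 ∧ ¬ HasSubdigraph D Gamma2 ∧ ¬ HasSubdigraph D Gamma3 ∧
    ¬ HasSubdigraph D Gamma4 ∧ ∀ k : ℕ, 5 ≤ k → ¬ HasSubdigraph D (Theta k)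

/-- `D` is acyclic: it has no directed cycle. -/
def AcyclicRel (D : V → V → Prop) : Prop := ∀ v : V, ¬ Relation.TransGen D v v

/-- `ψ_A(u,w)`: the maximal number of edges of a directed path from `u` to `w` in `A`
(in particular `ψ_A(u,u) = 0`). -/
def psiLongest (A : V → V → Prop) (u w : V) : ℕ :=
  sSup {l | ∃ p : List V, p.Chain' A ∧ p.Nodup ∧
    p.head? = some u ∧ p.getLast? = some w ∧ p.length = l + 1}

/-- `d_D(u,w)`: the minimal number of edges of a directed path from `u` to `w` in `D`. -/
def ddist (D : V → V → Prop) (u w : V) : ℕ :=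
  sInf {l | ∃ p : List V, p.Chain' D ∧ p.head? = some u ∧ p.getLast? = some w ∧
    p.length = l + 1}

/-- A tournament: no loops, and exactly one of `(u,v)`, `(v,u)` is an edge for `u ≠ v`. -/
def IsTournament (D : V → V → Prop) : Prop :=
  (∀ v : V, ¬ D v v) ∧ ∀ u v : V, u ≠ v → (D u v ∨ D v u) ∧ ¬ (D u v ∧ D v u)

/-- A strong (strongly connected) digraph. -/
def IsStrongDigraph (D : V → V → Prop) : Prop :=
  ∀ u v : V, Relation.ReflTransGen D u v

/-!
Lower bound: appending an arc `(a → b)` to a word raises `n + cycl − fix` by at most one. If `a`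
was fixed it loses that fixed point, but then no cyclic orbit can pass through `b`, because the
preimage `a` of `b` is no longer in the range; otherwise no fixed point is lost, and at most one
new cyclic orbit, the one through `b`, appears.

Upper bound: a map `α ≠ id` without cyclic orbits is not surjective, and for `z` outside its range
`α` is `α` with `z` made fixed, followed by the arc `(z → α z)`. If making `z` fixed closes a cycle
`C` (necessarily through `α z`), freeze `C` pointwise as well: a block of `|C| + 1` arcs through
`z` then restores `C` and performs `(z → α z)` at once. A cyclic orbit `C` of a non-surjective map
is removed in the same way, at cost `|C| + 1`, using a point `z` outside the range.
-/

open Function Set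

section Words

variable [DecidableEq V]

lemma arcMap_ne_left {a b : V} (hab : a ≠ b) (y : V) : arcMap a b y ≠ a := by
  unfold arcMap
  split_ifs with h
  · exact hab.symm
  · exact h

lemma wordEval_nil : wordEval ([] : List (V × V)) = id := rfl

lemma wordEval_cons (e : V × V) (w : List (V × V)) :
    wordEval (e :: w) = wordEval w ∘ arcMap e.1 e.2 := rfl

lemma wordEval_append (u v : List (V × V)) : wordEval (u ++ v) = wordEval v ∘ wordEval u := by
  funext x
  simp [wordEval, List.foldl_append]

lemma arcMap_comp_of_notMem_range {f : V → V} {z : V} (hz : z ∉ range f) (c : V) :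
    arcMap z c ∘ f = f := by
  funext x
  have hx : f x ≠ z := fun h => hz ⟨x, h⟩
  simp [arcMap, hx]

lemma arcMap_comp_update_self {f : V → V} {z : V} (hz : z ∉ range f) :
    arcMap z (f z) ∘ update f z z = f := by
  funext x
  by_cases hx : x = z
  · subst hx
    simp [arcMap]
  · have hfx : f x ≠ z := fun h => hz ⟨x, h⟩
    simp [arcMap, update_of_ne hx, hfx]

end Words

namespace IsCyclicOrbit

variable {f g : V → V} {C D : Set V}

lemma map_mem (h : IsCyclicOrbit f C) {x : V} (hx : x ∈ C) : f x ∈ C := by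
  obtain ⟨-, ⟨x₀, -, -, rfl⟩, -⟩ := h
  obtain ⟨k, rfl⟩ := hx
  exact ⟨k + 1, iterate_succ_apply' f k x₀⟩

lemma mem_of_map_mem (h : IsCyclicOrbit f C) {y : V} (hy : f y ∈ C) : y ∈ C := h.2.2 y hy

lemma mapsTo (h : IsCyclicOrbit f C) : MapsTo f C C := fun _ => h.map_mem

lemma nonempty (h : IsCyclicOrbit f C) : C.Nonempty :=
  nonempty_of_ncard_ne_zero (by linarith [h.1])

lemma eq_setOf_iterate (h : IsCyclicOrbit f C) {x : V} (hx : x ∈ C) :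
    x ∈ periodicPts f ∧ C = {y | ∃ k, f^[k] x = y} := by
  obtain ⟨-, ⟨x₀, -, ⟨p, hp, hper⟩, rfl⟩, -⟩ := h
  obtain ⟨m, rfl⟩ := hx
  have hx₀ : x₀ ∈ periodicPts f := mk_mem_periodicPts hp hper
  have hx : f^[m] x₀ ∈ periodicPts f := mk_mem_periodicPts hp (IsPeriodicPt.apply_iterate hper m)
  refine ⟨hx, ?_⟩
  ext y
  simp only [mem_ofPred_eq]
  rw [← mem_periodicOrbit_iff hx₀, ← mem_periodicOrbit_iff hx,
    periodicOrbit_apply_iterate_eq hx₀]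

lemma eq_of_mem (hC : IsCyclicOrbit f C) (hD : IsCyclicOrbit f D) {x : V} (hxC : x ∈ C)
    (hxD : x ∈ D) : C = D :=
  (hC.eq_setOf_iterate hxC).2.trans (hD.eq_setOf_iterate hxD).2.symm

lemma apply_ne (h : IsCyclicOrbit f C) {x : V} (hx : x ∈ C) : f x ≠ x := by
  intro hfix
  have hsub : C ⊆ {x} := by
    rw [(h.eq_setOf_iterate hx).2]
    rintro y ⟨k, rfl⟩
    exact iterate_fixed hfix k
  have := (Set.ncard_le_ncard hsub).trans (ncard_singleton x).le
  linarith [h.1]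

lemma subset_range (h : IsCyclicOrbit f C) : C ⊆ range f := by
  intro y hy
  obtain ⟨hper, -⟩ := h.eq_setOf_iterate hy
  obtain ⟨m, hm⟩ : ∃ m, minimalPeriod f y = m + 1 :=
    Nat.exists_eq_add_one.mpr (minimalPeriod_pos_of_mem_periodicPts hper)
  have hy : f^[m + 1] y = y := hm ▸ iterate_minimalPeriod
  exact ⟨f^[m] y, by rwa [iterate_succ_apply'] at hy⟩

lemma of_eqOn (h : IsCyclicOrbit f C) (hfg : EqOn g f C) (hpre : ∀ y, g y ∈ C → y ∈ C) :
    IsCyclicOrbit g C := by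
  have hiter : ∀ k, ∀ x ∈ C, g^[k] x = f^[k] x := by
    intro k
    induction k with
    | zero => intro x _; rfl
    | succ k ih =>
      intro x hx
      rw [iterate_succ_apply, iterate_succ_apply, hfg hx, ih _ (h.map_mem hx)]
  obtain ⟨hcard, ⟨x₀, hx₀, ⟨k, hk, hper⟩, horb⟩, -⟩ := h
  refine ⟨hcard, ⟨x₀, hx₀, ⟨k, hk, (hiter k x₀ hx₀).trans hper⟩, ?_⟩, hpre⟩
  simp only [horb, hiter _ x₀ hx₀]

end IsCyclicOrbit

section Counts

variable {f : V → V}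

lemma cyclCnt_eq_zero_iff [Finite V] : cyclCnt f = 0 ↔ ∀ C, ¬ IsCyclicOrbit f C := by
  rw [cyclCnt, Set.ncard_eq_zero]
  exact Set.eq_empty_iff_forall_notMem

lemma cyclCnt_id : cyclCnt (id : V → V) = 0 := by
  rw [cyclCnt, ← Set.ncard_empty (Set V)]
  congr 1
  refine Set.eq_empty_iff_forall_notMem.mpr fun C hC => ?_
  obtain ⟨x, hx⟩ := hC.nonempty
  exact hC.apply_ne hx rfl

lemma fixCnt_id : fixCnt (id : V → V) = Nat.card V := by
  simp [fixCnt]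

lemma fixCnt_le [Finite V] (f : V → V) : fixCnt f ≤ Nat.card V := by
  rw [← Set.ncard_univ]
  exact Set.ncard_le_ncard (Set.subset_univ _)

lemma fixCnt_piecewise_id [Finite V] (S : Set V) [DecidablePred (· ∈ S)]
    (hS : ∀ x ∈ S, f x ≠ x) : fixCnt (S.piecewise id f) = fixCnt f + S.ncard := by
  have hfix : {x | S.piecewise id f x = x} = {x | f x = x} ∪ S := by
    ext x
    by_cases hx : x ∈ S <;> simp [hx]
  rw [fixCnt, hfix]
  exact Set.ncard_union_eq (Set.disjoint_left.mpr fun x hfx hxS => hS x hxS hfx)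

lemma fixCnt_update_self [DecidableEq V] [Finite V] {z : V} (hz : f z ≠ z) :
    fixCnt (update f z z) = fixCnt f + 1 := by
  classical
  have hupdate : update f z z = ({z} : Set V).piecewise id f := by
    rw [piecewise_singleton]
    rfl
  rw [hupdate, fixCnt_piecewise_id _ fun x hx => mem_singleton_iff.mp hx ▸ hz, ncard_singleton]

end Counts

section LowerBound

variable [DecidableEq V] {a b : V}

lemma IsCyclicOrbit.of_arcMap_comp (hab : a ≠ b) {γ : V → V} {C : Set V}
    (hC : IsCyclicOrbit (arcMap a b ∘ γ) C) (hb : b ∉ C) : IsCyclicOrbit γ C := by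
  have haC : a ∉ C := fun ha => by
    obtain ⟨x, hx⟩ := hC.subset_range ha
    exact arcMap_ne_left hab _ hx
  have heq : ∀ x, γ x ≠ a → (arcMap a b ∘ γ) x = γ x := fun x hx => if_neg hx
  refine hC.of_eqOn (fun x hx => ?_) (fun y hy => ?_)
  · have hga : γ x ≠ a := fun h => hb (by simpa [arcMap, h] using hC.map_mem hx)
    exact (heq x hga).symm
  · exact hC.mem_of_map_mem (by rwa [heq y (fun h => haC (h ▸ hy))])

lemma fixCnt_add_cyclCnt_arcMap_comp_le [Finite V] (hab : a ≠ b) (γ : V → V) :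
    fixCnt γ + cyclCnt (arcMap a b ∘ γ) ≤ fixCnt (arcMap a b ∘ γ) + cyclCnt γ + 1 := by
  set β := arcMap a b ∘ γ
  have hfix_sub : {x | γ x = x} \ {a} ⊆ {x | β x = x} := by
    rintro x ⟨hx, hxa⟩
    change arcMap a b (γ x) = x
    rw [show γ x = x from hx]
    exact if_neg hxa
  by_cases ha : γ a = a
  · -- `a` stops being fixed, but no cyclic orbit of `β` passes through `b`: it would contain
    -- the preimage `a` of `b`, which is outside the range of `β`.
    have hfix : fixCnt γ ≤ fixCnt β + 1 :=
      (ncard_le_ncard_sdiff_add_ncard _ {a}).trans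
        (add_le_add (ncard_le_ncard hfix_sub) (ncard_singleton a).le)
    have hcycl : cyclCnt β ≤ cyclCnt γ := by
      refine ncard_le_ncard fun C (hC : IsCyclicOrbit β C) => hC.of_arcMap_comp hab fun hb => ?_
      have hβa : β a = b := by simp [β, arcMap, ha]
      obtain ⟨x, hx⟩ := hC.subset_range (hC.mem_of_map_mem (hβa ▸ hb))
      exact arcMap_ne_left hab _ hx
    omega
  · have hfix : fixCnt γ ≤ fixCnt β :=
      ncard_le_ncard fun x (hx : γ x = x) => hfix_sub ⟨hx, fun hxa => ha (hxa ▸ hx)⟩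
    have hsub : {C | IsCyclicOrbit β C} ⊆
        {C | IsCyclicOrbit γ C} ∪ {C | IsCyclicOrbit β C ∧ b ∈ C} := fun C hC =>
      (em (b ∈ C)).elim (fun hb => Or.inr ⟨hC, hb⟩) (fun hb => Or.inl (hC.of_arcMap_comp hab hb))
    have hb : {C | IsCyclicOrbit β C ∧ b ∈ C}.ncard ≤ 1 :=
      (ncard_le_one (toFinite _)).mpr fun C hC D hD => hC.1.eq_of_mem hD.1 hC.2 hD.2
    have hcycl : cyclCnt β ≤ cyclCnt γ + 1 :=
      (ncard_le_ncard hsub).trans ((ncard_union_le _ _).trans (add_le_add le_rfl hb))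
    omega

lemma card_add_cyclCnt_wordEval_le [Finite V] (w : List (V × V)) (hw : ∀ e ∈ w, e.1 ≠ e.2) :
    Nat.card V + cyclCnt (wordEval w) ≤ fixCnt (wordEval w) + w.length := by
  induction w using List.reverseRecOn with
  | nil => simp [wordEval_nil, fixCnt_id, cyclCnt_id]
  | append_singleton w e ih =>
    have hw' := ih fun e' he' => hw e' (List.mem_append_left _ he')
    have hstep := fixCnt_add_cyclCnt_arcMap_comp_le (hw e (by simp)) (wordEval w)
    rw [wordEval_append, List.length_append]
    change _ + cyclCnt (arcMap e.1 e.2 ∘ _) ≤ fixCnt (arcMap e.1 e.2 ∘ _) + _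
    simp only [List.length_singleton]
    omega

end LowerBound

lemma ncard_setOf_iterate_eq_minimalPeriod {f : V → V} {c : V} (hc : c ∈ periodicPts f) :
    {y | ∃ k, f^[k] c = y}.ncard = minimalPeriod f c := by
  have himage : {y | ∃ k, f^[k] c = y} = (fun i => f^[i] c) '' Iio (minimalPeriod f c) := by
    ext y
    refine ⟨fun ⟨k, hk⟩ => ⟨k % minimalPeriod f c, ?_, ?_⟩, fun ⟨i, _, hi⟩ => ⟨i, hi⟩⟩
    · exact Nat.mod_lt _ (minimalPeriod_pos_of_mem_periodicPts hc)
    · simpa only [iterate_mod_minimalPeriod_eq] using hk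
  rw [himage, iterate_injOn_Iio_minimalPeriod.ncard_image, ncard_Iio_nat]

def shiftWord (f : V → V) (x : V) : ℕ → List (V × V)
  | 0 => []
  | k + 1 => (f^[k] x, f^[k + 1] x) :: shiftWord f x k

lemma length_shiftWord (f : V → V) (x : V) (k : ℕ) : (shiftWord f x k).length = k := by
  induction k with
  | zero => rfl
  | succ k ih => simp [shiftWord, ih]

lemma shiftWord_fst_ne_snd {f : V → V} {x : V} {k : ℕ} (hinj : InjOn (fun i => f^[i] x) (Iic k)) :
    ∀ e ∈ shiftWord f x k, e.1 ≠ e.2 := by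
  induction k with
  | zero => simp [shiftWord]
  | succ k ih =>
    intro e he
    rcases List.mem_cons.mp he with rfl | he
    · exact fun h => k.succ_ne_self (hinj (by simp) (by simp) h.symm)
    · exact ih (hinj.mono (Iic_subset_Iic.mpr k.le_succ)) e he

section ShiftWord

variable [DecidableEq V] {f : V → V} {x : V}

lemma wordEval_shiftWord {k : ℕ} (hinj : InjOn (fun i => f^[i] x) (Iic k)) :
    wordEval (shiftWord f x k) = fun y => if ∃ i < k, f^[i] x = y then f y else y := by
  induction k with
  | zero => funext y; simp [shiftWord, wordEval_nil]
  | succ k ih =>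
    rw [shiftWord, wordEval_cons, ih (hinj.mono (Iic_subset_Iic.mpr k.le_succ))]
    funext y
    change (if ∃ i < k, f^[i] x = _ then _ else _) = _
    by_cases hy : y = f^[k] x
    · subst hy
      have hnot : ¬ ∃ i < k, f^[i] x = f^[k + 1] x := by
        rintro ⟨i, hi, h⟩
        have := hinj (show i ∈ Iic (k + 1) by simp; omega) (by simp) h
        omega
      rw [arcMap, if_pos rfl, if_neg hnot, if_pos ⟨k, k.lt_succ_self, rfl⟩, iterate_succ_apply']
    · have hiff : (∃ i < k + 1, f^[i] x = y) ↔ ∃ i < k, f^[i] x = y := by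
        refine ⟨fun ⟨i, hi, h⟩ => ⟨i, ?_, h⟩, fun ⟨i, hi, h⟩ => ⟨i, by omega, h⟩⟩
        exact lt_of_le_of_ne (Nat.lt_succ_iff.mp hi) fun hik => hy (hik ▸ h.symm)
      simp only [arcMap, if_neg hy, hiff]

end ShiftWord

section CycleBlock

variable [DecidableEq V] {f : V → V}

lemma exists_word_cycle_block {c z : V} (hc : c ∈ periodicPts f) (hz : ∀ k, f^[k] c ≠ z) :
    ∃ u : List (V × V), (∀ e ∈ u, e.1 ≠ e.2) ∧ u.length = minimalPeriod f c + 1 ∧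
      wordEval u z = c ∧ (∀ k, wordEval u (f^[k] c) = f (f^[k] c)) ∧
      ∀ y, (∀ k, f^[k] c ≠ y) → y ≠ z → wordEval u y = y := by
  obtain ⟨m, hm⟩ : ∃ m, minimalPeriod f c = m + 1 :=
    Nat.exists_eq_add_one.mpr (minimalPeriod_pos_of_mem_periodicPts hc)
  have hinj : InjOn (fun i => f^[i] c) (Iic m) :=
    iterate_injOn_Iio_minimalPeriod.mono fun i (hi : i ≤ m) => show i < _ by omega
  have hnot_z : ¬ ∃ i < m, f^[i] c = z := fun ⟨i, _, h⟩ => hz i h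
  -- The arc `(f^[m] c → z)` opens the cycle, the shift moves the rest of it forward, and
  -- `(z → c)` closes it again.
  have heval : ∀ y, wordEval ((f^[m] c, z) :: (shiftWord f c m ++ [(z, c)])) y = arcMap z c
      (if ∃ i < m, f^[i] c = arcMap (f^[m] c) z y then f (arcMap (f^[m] c) z y)
        else arcMap (f^[m] c) z y) := by
    intro y
    rw [wordEval_cons, wordEval_append, wordEval_shiftWord hinj]
    rfl
  refine ⟨(f^[m] c, z) :: (shiftWord f c m ++ [(z, c)]), ?_, by simp [length_shiftWord, hm], ?_,
    fun k => ?_, fun y hy hyz => ?_⟩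
  · intro e he
    simp only [List.mem_cons, List.mem_append, List.not_mem_nil,
      or_false] at he
    rcases he with rfl | he | rfl
    · exact hz m
    · exact shiftWord_fst_ne_snd hinj e he
    · exact (hz 0).symm
  · simp [heval, arcMap, hnot_z]
  · obtain ⟨j, hj, hjk⟩ : ∃ j ≤ m, f^[j] c = f^[k] c :=
      ⟨k % (m + 1), Nat.lt_succ_iff.mp (Nat.mod_lt _ m.succ_pos), hm ▸ iterate_mod_minimalPeriod_eq⟩
    rw [← hjk, heval]
    rcases hj.lt_or_eq with hj | rfl
    · have hne : f^[j] c ≠ f^[m] c := fun h => hj.ne (hinj (by simp; omega) (by simp) h)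
      have hfz : f (f^[j] c) ≠ z := by rw [← iterate_succ_apply' f j c]; exact hz _
      have hmem : ∃ i < m, f^[i] c = f^[j] c := ⟨j, hj, rfl⟩
      simp [arcMap, hne, hfz, hmem]
    · have hlast : f (f^[j] c) = c := by
        have := iterate_minimalPeriod (f := f) (x := c)
        rwa [hm, iterate_succ_apply'] at this
      simp [arcMap, hnot_z, hlast]
  · have hnot_y : ¬ ∃ i < m, f^[i] c = y := fun ⟨i, _, h⟩ => hy i h
    simp [heval, arcMap, (hy m).symm, hnot_y, hyz]

end CycleBlock

section CyclicOrbits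

variable {f : V → V} {C D : Set V}

lemma isCyclicOrbit_piecewise_id_iff {S : Set V} [DecidablePred (· ∈ S)] (hS : MapsTo f S S) :
    IsCyclicOrbit (S.piecewise id f) D ↔ IsCyclicOrbit f D ∧ Disjoint D S := by
  constructor
  · intro hD
    have hdisj : Disjoint D S := disjoint_left.mpr fun x hxD hxS =>
      hD.apply_ne hxD (piecewise_eq_of_mem _ _ _ hxS)
    refine ⟨hD.of_eqOn (fun x hx => (piecewise_eq_of_notMem _ _ _ (disjoint_left.mp hdisj hx)).symm)
      fun y hy => ?_, hdisj⟩
    by_cases hyS : y ∈ S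
    · exact absurd (hS hyS) (disjoint_left.mp hdisj hy)
    · exact hD.mem_of_map_mem (by rwa [piecewise_eq_of_notMem _ _ _ hyS])
  · rintro ⟨hD, hdisj⟩
    refine hD.of_eqOn (fun x hx => piecewise_eq_of_notMem _ _ _ (disjoint_left.mp hdisj hx))
      fun y hy => ?_
    by_cases hyS : y ∈ S
    · rw [piecewise_eq_of_mem _ _ _ hyS] at hy
      exact absurd hyS (disjoint_left.mp hdisj hy)
    · exact hD.mem_of_map_mem (by rwa [piecewise_eq_of_notMem _ _ _ hyS] at hy)

lemma IsCyclicOrbit.cyclCnt_piecewise_id [Finite V] [DecidablePred (· ∈ C)]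
    (hC : IsCyclicOrbit f C) : cyclCnt (C.piecewise id f) + 1 = cyclCnt f := by
  have hset : {D | IsCyclicOrbit (C.piecewise id f) D} = {D | IsCyclicOrbit f D} \ {C} := by
    ext D
    rw [mem_ofPred_eq, isCyclicOrbit_piecewise_id_iff hC.mapsTo]
    refine ⟨fun ⟨hD, hdisj⟩ => ⟨hD, fun hDC => ?_⟩, fun ⟨hD, hDC⟩ => ⟨hD, ?_⟩⟩
    · obtain ⟨c, hc⟩ := hC.nonempty
      exact disjoint_left.mp hdisj (mem_singleton_iff.mp hDC ▸ hc) hc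
    · exact disjoint_left.mpr fun x hxD hxC => hDC (hD.eq_of_mem hC hxD hxC)
  have hpos : 0 < cyclCnt f := (ncard_pos (toFinite _)).mpr ⟨C, hC⟩
  rw [cyclCnt, hset, ncard_sdiff_singleton_of_mem (show C ∈ {D | IsCyclicOrbit f D} from hC)]
  exact Nat.sub_add_cancel hpos

lemma IsCyclicOrbit.exists_word_comp_piecewise_id [DecidableEq V] [DecidablePred (· ∈ C)]
    (hC : IsCyclicOrbit f C) {c z : V} (hc : c ∈ C) (hz : z ∉ C) :
    ∃ u : List (V × V), (∀ e ∈ u, e.1 ≠ e.2) ∧ u.length = C.ncard + 1 ∧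
      wordEval u ∘ C.piecewise id f = arcMap z c ∘ f := by
  obtain ⟨hper, hCeq⟩ := hC.eq_setOf_iterate hc
  have hmem : ∀ y, y ∈ C ↔ ∃ k, f^[k] c = y := fun y => by rw [hCeq]; rfl
  obtain ⟨u, hu, hlen, hu_z, hu_C, hu_out⟩ :=
    exists_word_cycle_block hper fun k h => hz ((hmem z).mpr ⟨k, h⟩)
  refine ⟨u, hu, by rw [hlen, hCeq, ncard_setOf_iterate_eq_minimalPeriod hper], ?_⟩
  funext y
  by_cases hy : y ∈ C
  · have hfz : f y ≠ z := fun h => hz (by rw [← h]; exact hC.map_mem hy)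
    obtain ⟨k, rfl⟩ := (hmem y).mp hy
    simp [piecewise_eq_of_mem _ _ _ hy, hu_C, arcMap, hfz]
  · have hfy : f y ∉ C := fun h => hy (hC.mem_of_map_mem h)
    rw [comp_apply, comp_apply, piecewise_eq_of_notMem _ _ _ hy]
    by_cases hfz : f y = z
    · simp [hfz, hu_z, arcMap]
    · rw [hu_out _ (fun k h => hfy ((hmem _).mpr ⟨k, h⟩)) hfz]
      simp [arcMap, hfz]

lemma eq_id_of_bijective_of_cyclCnt_eq_zero [Finite V] (hf : Bijective f) (h : cyclCnt f = 0) :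
    f = id := by
  by_contra hne
  obtain ⟨x, hx⟩ : ∃ x, f x ≠ x := by
    by_contra! h'
    exact hne (funext h')
  have hper : x ∈ periodicPts f := hf.injective.mem_periodicPts x
  obtain ⟨m, hm⟩ : ∃ m, minimalPeriod f x = m + 1 :=
    Nat.exists_eq_add_one.mpr (minimalPeriod_pos_of_mem_periodicPts hper)
  refine cyclCnt_eq_zero_iff.mp h {y | ∃ k, f^[k] x = y}
    ⟨?_, ⟨x, ⟨0, rfl⟩, ⟨m + 1, m.succ_pos, hm ▸ iterate_minimalPeriod⟩, rfl⟩, ?_⟩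
  · exact (one_lt_ncard (toFinite _)).mpr ⟨x, ⟨0, rfl⟩, f x, ⟨1, rfl⟩, hx.symm⟩
  · rintro y ⟨k, hk⟩
    refine ⟨k + m, hf.injective ?_⟩
    rw [← hk, ← iterate_succ_apply' f, show (k + m).succ = k + (m + 1) by omega,
      iterate_add_apply, ← hm, iterate_minimalPeriod]

lemma exists_notMem_range_of_not_bijective [Finite V] (hf : ¬ Bijective f) :
    ∃ z, z ∉ range f := by
  by_contra! h
  exact hf (Finite.surjective_iff_bijective.mp h)

lemma apply_mem_of_isCyclicOrbit_update [DecidableEq V] [Finite V] (hf : cyclCnt f = 0) {z : V}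
    (hC : IsCyclicOrbit (update f z z) C) : f z ∈ C := by
  by_contra hfz
  have hzC : z ∉ C := fun h => hC.apply_ne h (update_self z z f)
  refine cyclCnt_eq_zero_iff.mp hf C (hC.of_eqOn (fun x hx => ?_) fun y hy => ?_)
  · exact (update_of_ne (ne_of_mem_of_not_mem hx hzC) z f).symm
  · by_cases hyz : y = z
    · exact absurd (hyz ▸ hy) hfz
    · exact hC.mem_of_map_mem (by rwa [update_of_ne hyz])

end CyclicOrbits

section UpperBound

variable [DecidableEq V] [Finite V] {f : V → V}

lemma exists_word_comp_eq_of_cyclCnt_eq_zero (hf : cyclCnt f = 0) (hid : f ≠ id) :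
    ∃ (g : V → V) (u : List (V × V)), (∀ e ∈ u, e.1 ≠ e.2) ∧ 0 < u.length ∧
      cyclCnt g = 0 ∧ fixCnt g = fixCnt f + u.length ∧ wordEval u ∘ g = f := by
  classical
  obtain ⟨z, hz⟩ := exists_notMem_range_of_not_bijective
    fun hb => hid (eq_id_of_bijective_of_cyclCnt_eq_zero hb hf)
  have hg_fix := fixCnt_update_self fun h => hz ⟨z, h⟩
  by_cases hg : cyclCnt (update f z z) = 0
  · exact ⟨update f z z, [(z, f z)], by simpa using fun h => hz ⟨z, h.symm⟩, by simp, hg, hg_fix,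
      arcMap_comp_update_self hz⟩
  obtain ⟨C, hC⟩ : ∃ C, IsCyclicOrbit (update f z z) C := by
    simpa [cyclCnt_eq_zero_iff] using hg
  have hfzC : f z ∈ C := apply_mem_of_isCyclicOrbit_update hf hC
  have hzC : z ∉ C := fun h => hC.apply_ne h (update_self z z f)
  obtain ⟨u, hu, hulen, hueval⟩ := hC.exists_word_comp_piecewise_id hfzC hzC
  refine ⟨C.piecewise id (update f z z), u, hu, by omega, ?_, ?_, by
    rw [hueval, arcMap_comp_update_self hz]⟩
  · refine cyclCnt_eq_zero_iff.mpr fun D hD => ?_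
    obtain ⟨hD, hdisj⟩ := (isCyclicOrbit_piecewise_id_iff hC.mapsTo).mp hD
    exact disjoint_left.mp hdisj (apply_mem_of_isCyclicOrbit_update hf hD) hfzC
  · rw [fixCnt_piecewise_id C fun x hx => hC.apply_ne hx, hg_fix, hulen]
    ring

lemma exists_word_comp_eq_of_isCyclicOrbit (hf : ¬ Bijective f) {C : Set V}
    (hC : IsCyclicOrbit f C) :
    ∃ (g : V → V) (u : List (V × V)), (∀ e ∈ u, e.1 ≠ e.2) ∧ ¬ Bijective g ∧
      cyclCnt g + 1 = cyclCnt f ∧ fixCnt g + 1 = fixCnt f + u.length ∧ wordEval u ∘ g = f := by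
  classical
  obtain ⟨z, hz⟩ := exists_notMem_range_of_not_bijective hf
  obtain ⟨c, hc⟩ := hC.nonempty
  have hzC : z ∉ C := fun h => hz (hC.subset_range h)
  have hzg : z ∉ range (C.piecewise id f) := by
    rintro ⟨y, hy⟩
    by_cases hyC : y ∈ C
    · rw [piecewise_eq_of_mem _ _ _ hyC] at hy
      exact hzC (hy ▸ hyC)
    · rw [piecewise_eq_of_notMem _ _ _ hyC] at hy
      exact hz ⟨y, hy⟩
  obtain ⟨u, hu, hulen, hueval⟩ := hC.exists_word_comp_piecewise_id hc hzC
  refine ⟨C.piecewise id f, u, hu, fun hb => hzg (hb.surjective z), hC.cyclCnt_piecewise_id, ?_,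
    by rw [hueval, arcMap_comp_of_notMem_range hz]⟩
  rw [fixCnt_piecewise_id C fun x hx => hC.apply_ne hx, hulen]
  rfl

theorem exists_word_of_cyclCnt_eq_zero (f : V → V) (hf : cyclCnt f = 0) :
    ∃ w : List (V × V), (∀ e ∈ w, e.1 ≠ e.2) ∧ w.length + fixCnt f = Nat.card V ∧
      wordEval w = f := by
  induction hk : Nat.card V - fixCnt f using Nat.strong_induction_on generalizing f with
  | _ k ih =>
  by_cases hid : f = id
  · subst hid
    exact ⟨[], by simp, by simp [fixCnt_id], rfl⟩
  obtain ⟨g, u, hu, hulen, hg, hg_fix, hgu⟩ := exists_word_comp_eq_of_cyclCnt_eq_zero hf hid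
  obtain ⟨w, hw, hlen, rfl⟩ := ih _ (by have := fixCnt_le g; omega) g hg rfl
  exact ⟨w ++ u, List.forall_mem_append.mpr ⟨hw, hu⟩, by rw [List.length_append]; omega,
    by rw [wordEval_append, hgu]⟩

theorem exists_word_of_not_bijective (f : V → V) (hf : ¬ Bijective f) :
    ∃ w : List (V × V), (∀ e ∈ w, e.1 ≠ e.2) ∧
      w.length + fixCnt f = Nat.card V + cyclCnt f ∧ wordEval w = f := by
  induction hk : cyclCnt f generalizing f with
  | zero => simpa using exists_word_of_cyclCnt_eq_zero f hk
  | succ k ih =>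
  obtain ⟨C, hC⟩ : ∃ C, IsCyclicOrbit f C := by
    by_contra! h
    simp [cyclCnt_eq_zero_iff.mpr h] at hk
  obtain ⟨g, u, hu, hg, hg_cycl, hg_fix, hgu⟩ := exists_word_comp_eq_of_isCyclicOrbit hf hC
  obtain ⟨w, hw, hlen, rfl⟩ := ih g hg (by omega)
  exact ⟨w ++ u, List.forall_mem_append.mpr ⟨hw, hu⟩, by rw [List.length_append]; omega,
    by rw [wordEval_append, hgu]⟩

end UpperBound

theorem stmt0_general (n : ℕ) (α : Fin n → Fin n) (hα : ¬ Function.Bijective α) :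
    arcLen (fun a b : Fin n => a ≠ b) α = n + cyclCnt α - fixCnt α := by
  obtain ⟨w₀, hw₀, hlen₀, heval₀⟩ := exists_word_of_not_bijective α hα
  rw [Nat.card_fin] at hlen₀
  have hmem : n + cyclCnt α - fixCnt α ∈ {k | ∃ w : List (Fin n × Fin n), w.length = k ∧
      (∀ e ∈ w, e.1 ≠ e.2) ∧ wordEval w = α} := ⟨w₀, by omega, hw₀, heval₀⟩
  refine le_antisymm (Nat.sInf_le hmem) ?_
  obtain ⟨w, hlen, hw, heval⟩ := Nat.sInf_mem ⟨_, hmem⟩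
  have hlower := card_add_cyclCnt_wordEval_le w hw
  rw [heval, Nat.card_fin] at hlower
  rw [arcLen, ← hlen]
  omega

/-- Howie–Iwahori: for `n ≥ 2` and any non-bijective `α` on `{1,…,n}`,
`ℓ(K_n, α) = n + cycl(α) − fix(α)`. -/
theorem stmt0 (n : ℕ) (hn : 2 ≤ n) (α : Fin n → Fin n) (hα : ¬ Function.Bijective α) :
    arcLen (fun a b : Fin n => a ≠ b) α = n + cyclCnt α - fixCnt α :=
  stmt0_general n α hα
end
end

section
/- Let D be a closed simple digraph satisfying property (★). Then every strong component of D (as an induced subdigraph) is either an undirected path on three vertices P3 or a complete digraph (containing both directed edges between every pair of its distinct vertices). Furthermore, every strong component isomorphic to P3 is a terminal strong component of D. -/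
noncomputable section

variable {V : Type*}

/-- Two strong components sharing a vertex are equal. -/
lemma sc_eq_of_mem {V : Type*} (D : V → V → Prop) {C C' : Set V}
    (h : IsSC D C) (h' : IsSC D C') {x : V} (hx : x ∈ C) (hx' : x ∈ C') : C = C' := by
  obtain ⟨v, rfl⟩ := h
  obtain ⟨v', rfl⟩ := h'
  obtain ⟨hx1, hx2⟩ := hx
  obtain ⟨hx1', hx2'⟩ := hx'
  ext u
  simp only [Set.mem_setOf_eq]
  constructor
  · rintro ⟨h1, h2⟩
    exact ⟨(h1.trans hx2).trans hx1', (hx2'.trans hx1).trans h2⟩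
  · rintro ⟨h1, h2⟩
    exact ⟨(h1.trans hx2').trans hx1, (hx2.trans hx1').trans h2⟩

/-- in a closed simple digraph satisfying (★), every strong component is an
undirected path `P3` or complete; and every `P3` strong component is terminal. -/
theorem stmt5 {V : Type*} [Fintype V] (D : V → V → Prop) (hloop : ∀ v, ¬ D v v)
    (hclosed : ClosedDigraph D) (hstar : StarCond D) (C : Set V) (hC : IsSC D C) :
    (IsP3 D C ∨ ∀ u ∈ C, ∀ w ∈ C, u ≠ w → D u w) ∧
    (IsP3 D C → IsTerminalSC D C) := by
  have hCsc := hC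
  obtain ⟨v, rfl⟩ := hC
  set C : Set V := {u | Relation.ReflTransGen D u v ∧ Relation.ReflTransGen D v u}
    with hCdef
  -- reachability inside the component
  have hreach : ∀ u w, u ∈ C → w ∈ C → Relation.ReflTransGen D u w := by
    intro u w hu hw
    exact hu.1.trans hw.2
  -- edges inside the component are symmetric
  have hsym : ∀ u w, u ∈ C → w ∈ C → D u w → D w u := by
    intro u w hu hw h
    exact hclosed w u h (hreach w u hw hu)
  -- the internal edge relation
  set E : V → V → Prop := fun x y => x ∈ C ∧ y ∈ C ∧ D x y with hEdef
  -- any two vertices of C are joined by a path inside C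
  have hE : ∀ u w, u ∈ C → w ∈ C → Relation.ReflTransGen E u w := by
    intro u w hu hw
    have h := hreach u w hu hw
    revert hu
    induction h using Relation.ReflTransGen.head_induction_on with
    | refl => exact fun _ => Relation.ReflTransGen.refl
    | @head a c hac hcw ih =>
      intro ha
      have hc : c ∈ C := ⟨hcw.trans hw.1, ha.2.tail hac⟩
      exact Relation.ReflTransGen.head ⟨ha, hc, hac⟩ (ih hc)
  -- extraction of a distance-two triple
  have htriple : ∀ u w, w ∈ C → Relation.ReflTransGen E u w → u ≠ w → ¬ D u w →
      ∃ p q r, E p q ∧ E q r ∧ p ≠ r ∧ ¬ D p r := by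
    intro u w hwC h
    induction h using Relation.ReflTransGen.head_induction_on with
    | refl => exact fun hne _ => absurd rfl hne
    | @head a c hac hcw ih =>
      intro hne hnD
      by_cases hcw' : c = w
      · subst hcw'
        exact absurd hac.2.2 hnD
      · by_cases hDcw : D c w
        · exact ⟨a, c, w, hac, ⟨hac.2.1, hwC, hDcw⟩, hne, hnD⟩
        · exact ih hcw' hDcw
  -- P3 components are terminal
  have hterm : IsP3 D C → IsTerminalSC D C := by
    rintro ⟨a, b, c, hab, hbc, hac, hCeq, hiff⟩
    have haC : a ∈ C := by rw [hCeq]; simp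
    have hbC : b ∈ C := by rw [hCeq]; simp
    have hcC : c ∈ C := by rw [hCeq]; simp
    have hDab : D a b := (hiff a haC b hbC).2 (Or.inl ⟨rfl, rfl⟩)
    have hDba : D b a := (hiff b hbC a haC).2 (Or.inr (Or.inl ⟨rfl, rfl⟩))
    have hDbc : D b c := (hiff b hbC c hcC).2 (Or.inr (Or.inr (Or.inl ⟨rfl, rfl⟩)))
    have hDcb : D c b := (hiff c hcC b hbC).2 (Or.inr (Or.inr (Or.inr ⟨rfl, rfl⟩)))
    have hnac : ¬ D a c := by
      intro h
      rcases (hiff a haC c hcC).1 h with ⟨_, h2⟩ | ⟨h1, _⟩ | ⟨h1, _⟩ | ⟨h1, _⟩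
      · exact hbc h2.symm
      · exact hab h1
      · exact hab h1
      · exact hac h1
    have hnca : ¬ D c a := by
      intro h
      rcases (hiff c hcC a haC).1 h with ⟨h1, _⟩ | ⟨h1, _⟩ | ⟨h1, _⟩ | ⟨_, h2⟩
      · exact hac h1.symm
      · exact hbc h1.symm
      · exact hbc h1.symm
      · exact hab h2
    have star1 := hstar a b c hDab hDbc hac hnac
    have star2 := hstar c b a hDcb hDba (Ne.symm hac) hnca
    refine ⟨hCsc, ?_⟩
    intro C' hC' hne hconn
    obtain ⟨v1, hv1, v2, hv2, hD12⟩ := hconn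
    have hv1' : v1 = a ∨ v1 = b ∨ v1 = c := by
      rw [hCeq] at hv1; simpa using hv1
    have hv2S : v2 = a ∨ v2 = b ∨ v2 = c := by
      rcases hv1' with rfl | rfl | rfl
      · rcases star2 v2 (Or.inr hD12) with h | h | h
        · exact Or.inr (Or.inr h)
        · exact Or.inr (Or.inl h)
        · exact Or.inl h
      · exact star1 v2 (Or.inl hD12)
      · exact star1 v2 (Or.inr hD12)
    have hv2C : v2 ∈ C := by
      rw [hCeq]
      rcases hv2S with rfl | rfl | rfl <;> simp
    exact hne (sc_eq_of_mem D hC' hCsc hv2 hv2C)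
  by_cases hcomp : ∀ u ∈ C, ∀ w ∈ C, u ≠ w → D u w
  · exact ⟨Or.inr hcomp, hterm⟩
  · push_neg at hcomp
    obtain ⟨u, hu, w, hw, hne, hnD⟩ := hcomp
    obtain ⟨p, q, r, hpq, hqr, hpr, hnpr⟩ :=
      htriple u w hw (hE u w hu hw) hne hnD
    have hpC : p ∈ C := hpq.1
    have hqC : q ∈ C := hpq.2.1
    have hrC : r ∈ C := hqr.2.1
    have hDpq : D p q := hpq.2.2
    have hDqr : D q r := hqr.2.2
    have hDqp : D q p := hsym p q hpC hqC hDpq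
    have hDrq : D r q := hsym q r hqC hrC hDqr
    have hnrp : ¬ D r p := fun h => hnpr (hclosed p r h (hreach p r hpC hrC))
    have star1 := hstar p q r hDpq hDqr hpr hnpr
    have star2 := hstar r q p hDrq hDqp (Ne.symm hpr) hnrp
    have hclosedS : ∀ x y, (x = p ∨ x = q ∨ x = r) → D x y →
        (y = p ∨ y = q ∨ y = r) := by
      intro x y hx hxy
      rcases hx with rfl | rfl | rfl
      · rcases star2 y (Or.inr hxy) with h | h | h
        · exact Or.inr (Or.inr h)
        · exact Or.inr (Or.inl h)
        · exact Or.inl h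
      · exact star1 y (Or.inl hxy)
      · exact star1 y (Or.inr hxy)
    have hCsub : ∀ x ∈ C, x = p ∨ x = q ∨ x = r := by
      intro x hx
      have h := hE q x hqC hx
      clear hx
      induction h with
      | refl => exact Or.inr (Or.inl rfl)
      | tail _ he ih => exact hclosedS _ _ ih he.2.2
    have hpq_ne : p ≠ q := fun h => hloop q (h ▸ hDpq)
    have hqr_ne : q ≠ r := fun h => hloop r (h ▸ hDqr)
    have hCeq : C = {p, q, r} := by
      ext x
      constructor
      · intro hx
        simpa using hCsub x hx
      · intro hx
        rcases hx with rfl | rfl | rfl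
        exacts [hpC, hqC, hrC]
    have hP3 : IsP3 D C := by
      refine ⟨p, q, r, hpq_ne, hqr_ne, hpr, hCeq, ?_⟩
      intro x hx y hy
      constructor
      · intro hD
        rcases hCsub x hx with rfl | rfl | rfl <;> rcases hCsub y hy with rfl | rfl | rfl
        · exact absurd hD (hloop _)
        · exact Or.inl ⟨rfl, rfl⟩
        · exact absurd hD hnpr
        · exact Or.inr (Or.inl ⟨rfl, rfl⟩)
        · exact absurd hD (hloop _)
        · exact Or.inr (Or.inr (Or.inl ⟨rfl, rfl⟩))
        · exact absurd hD hnrp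
        · exact Or.inr (Or.inr (Or.inr ⟨rfl, rfl⟩))
        · exact absurd hD (hloop _)
      · rintro (⟨rfl, rfl⟩ | ⟨rfl, rfl⟩ | ⟨rfl, rfl⟩ | ⟨rfl, rfl⟩)
        exacts [hDpq, hDqp, hDqr, hDrq]
    exact ⟨Or.inl hP3, hterm⟩
end
end

section
/- Let D be a closed simple digraph satisfying property (★), and let C1 and C2 be distinct strong components of D such that C1 connects to C2. Then: (i) if C2 is nonterminal, then C1 fully connects to C2; (ii) if |C2| = 1 and either |C1| ≠ 2 or the vertex of C1 having an edge to C2 has out-degree at least 3, then C1 fully connects to C2; (iii) if |C2| = 2 and it is not the case that all edges from C1 to C2 end at one single vertex of C2, then C1 fully connects to C2; (iv) if |C2| ≥ 3, then C1 fully connects to C2. -/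
noncomputable section

variable {V : Type*}

/-!
Suppose `D a b` with `a ∈ C1`, `b ∈ C2`, and some `u ∈ C1` misses `b`. Walking from `u` to `a`
inside `C1` gives an edge `p → s` of `C1` with `¬ D p b` and `D s b`, so `p, s, b` is a path with
`d(p, b) = 2`. By (★) every out-neighbour of `b` lies in `{p, s, b}`; since no edge leads from `C2`
back into `C1`, `b` must be a sink. Dually, if `u → q → z` with `q, z ∈ C2` and `¬ D u z`, (★)
forces `q` and `z` to point only at each other, so `C2 = {q, z}` is terminal. This gives (i),
(iii) and (iv). In (ii) the sink `b` is the whole of `C2`, and (★) together with closedness shows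
that the crossing edge `p → s` exhausts `C1 = {p, s}` while the out-neighbours of `s`, the only
vertex of `C1` adjacent to `b`, lie in `{p, b}`.
-/

open Relation

theorem Set.ncard_le_two_of_subset_pair {α : Type*} {s : Set α} {a b : α} (h : s ⊆ {a, b}) :
    s.ncard ≤ 2 :=
  (Set.ncard_le_ncard h (Set.toFinite _)).trans <|
    (Set.ncard_insert_le _ _).trans (by rw [Set.ncard_singleton])

namespace Relation.ReflTransGen

variable {α : Type*} {r : α → α → Prop} {x y : α}

theorem exists_step_of_not {P : α → Prop} (h : ReflTransGen r x y) (hx : P x) (hy : ¬ P y) :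
    ∃ p s, ReflTransGen r x p ∧ r p s ∧ ReflTransGen r s y ∧ P p ∧ ¬ P s := by
  induction h with
  | refl => exact absurd hx hy
  | @tail z y hxz hzy ih =>
    by_cases hz : P z
    · exact ⟨z, y, hxz, hzy, .refl, hz, hy⟩
    · obtain ⟨p, s, hxp, hps, hsz, hp, hs⟩ := ih hz
      exact ⟨p, s, hxp, hps, hsz.tail hzy, hp, hs⟩

theorem eq_or_eq_of_forall_swap {q z : α} (hq : ∀ y, r q y → y = z) (hz : ∀ y, r z y → y = q)
    (h : ReflTransGen r q x) : x = q ∨ x = z := by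
  induction h with
  | refl => exact Or.inl rfl
  | tail _ hyx ih =>
    rcases ih with rfl | rfl
    · exact Or.inr (hq _ hyx)
    · exact Or.inl (hz _ hyx)

end Relation.ReflTransGen

section

variable {D : V → V → Prop} {C C1 C2 : Set V} {u w z : V}

theorem StarCond.eq_or_eq_of_adj_mid (hstar : StarCond D) (hloop : ∀ v, ¬ D v v)
    {v0 v1 v2 : V} (h01 : D v0 v1) (h12 : D v1 v2) (hne : v0 ≠ v2) (h02 : ¬ D v0 v2)
    (h : D v1 u) : u = v0 ∨ u = v2 := by
  rcases hstar v0 v1 v2 h01 h12 hne h02 u (Or.inl h) with rfl | rfl | rfl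
  · exact Or.inl rfl
  · exact absurd h (hloop _)
  · exact Or.inr rfl

theorem StarCond.eq_or_eq_of_adj_last (hstar : StarCond D) (hloop : ∀ v, ¬ D v v)
    {v0 v1 v2 : V} (h01 : D v0 v1) (h12 : D v1 v2) (hne : v0 ≠ v2) (h02 : ¬ D v0 v2)
    (h : D v2 u) : u = v0 ∨ u = v1 := by
  rcases hstar v0 v1 v2 h01 h12 hne h02 u (Or.inr h) with rfl | rfl | rfl
  · exact Or.inl rfl
  · exact Or.inr rfl
  · exact absurd h (hloop _)

theorem IsSC.reach (h : IsSC D C) (hu : u ∈ C) (hw : w ∈ C) : ReflTransGen D u w := by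
  obtain ⟨v, rfl⟩ := h
  exact hu.1.trans hw.2

theorem IsSC.mem_of_reach (h : IsSC D C) (hu : u ∈ C) (hw : w ∈ C)
    (huz : ReflTransGen D u z) (hzw : ReflTransGen D z w) : z ∈ C := by
  obtain ⟨v, rfl⟩ := h
  exact ⟨hzw.trans hw.1, hu.2.trans huz⟩

theorem IsSC.eq_of_reach (h1 : IsSC D C1) (h2 : IsSC D C2) (hu : u ∈ C1) (hw : w ∈ C2)
    (huw : ReflTransGen D u w) (hwu : ReflTransGen D w u) : C1 = C2 := by
  ext x
  exact ⟨fun hx => h2.mem_of_reach hw hw (hwu.trans (h1.reach hu hx)) (h1.reach hx hu |>.trans huw),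
    fun hx => h1.mem_of_reach hu hu (huw.trans (h2.reach hw hx)) (h2.reach hx hw |>.trans hwu)⟩

theorem IsSC.disjoint (h1 : IsSC D C1) (h2 : IsSC D C2) (hne : C1 ≠ C2) : Disjoint C1 C2 :=
  Set.disjoint_left.2 fun _ hx1 hx2 => hne (h1.eq_of_reach h2 hx1 hx2 .refl .refl)

theorem IsSC.not_adj_of_reach (h1 : IsSC D C1) (h2 : IsSC D C2) (hne : C1 ≠ C2) (hu : u ∈ C1)
    (hw : w ∈ C2) (huw : ReflTransGen D u w) : ¬ D w u :=
  fun hwu => hne (h1.eq_of_reach h2 hu hw huw (.single hwu))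

theorem IsSC.exists_adj_of_ne (h : IsSC D C) (hu : u ∈ C) (hw : w ∈ C) (hne : u ≠ w) :
    ∃ y, D u y := by
  rcases (h.reach hu hw).cases_head with rfl | ⟨y, huy, -⟩
  · exact absurd rfl hne
  · exact ⟨y, huy⟩

theorem IsSC.exists_crossing_adj (h : IsSC D C) {a b : V} (hu : u ∈ C) (ha : a ∈ C)
    (hub : ¬ D u b) (hab : D a b) : ∃ p ∈ C, ∃ s ∈ C, D p s ∧ ¬ D p b ∧ D s b := by
  obtain ⟨p, s, hup, hps, hsa, hpb, hsb⟩ :=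
    (h.reach hu ha).exists_step_of_not (P := (¬ D · b)) hub (not_not.2 hab)
  exact ⟨p, h.mem_of_reach hu ha hup (.head hps hsa), s, h.mem_of_reach hu ha (hup.tail hps) hsa,
    hps, hpb, not_not.1 hsb⟩

theorem IsSC.isTerminalSC_and_ncard_le_two {q : V} (h : IsSC D C) (hq : q ∈ C) (hz : z ∈ C)
    (hqz : ∀ y, D q y → y = z) (hzq : ∀ y, D z y → y = q) :
    IsTerminalSC D C ∧ C.ncard ≤ 2 := by
  have hsub : C ⊆ {q, z} := fun x hx => (h.reach hq hx).eq_or_eq_of_forall_swap hqz hzq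
  refine ⟨⟨h, fun C' hC' hne ⟨x, hx, y, hy, hxy⟩ => hne ?_⟩, Set.ncard_le_two_of_subset_pair hsub⟩
  have hyC : y ∈ C := by
    rcases hsub hx with rfl | rfl
    · rwa [hqz y hxy]
    · rwa [hzq y hxy]
  exact hC'.eq_of_reach h hy hyC .refl .refl

theorem forall_adj_of_adj_of_outNeighbor (hloop : ∀ v, ¬ D v v) (hstar : StarCond D)
    (h1 : IsSC D C1) (h2 : IsSC D C2) (hne : C1 ≠ C2) {a b : V} (ha : a ∈ C1) (hb : b ∈ C2)
    (hab : D a b) (hbw : D b w) : ∀ u ∈ C1, D u b := by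
  intro u hu
  by_contra hub
  obtain ⟨p, hp, s, hs, hps, hpb, hsb⟩ := h1.exists_crossing_adj hu ha hub hab
  rcases hstar.eq_or_eq_of_adj_last hloop hps hsb ((h1.disjoint h2 hne).ne_of_mem hp hb) hpb hbw
    with rfl | rfl
  · exact h1.not_adj_of_reach h2 hne hp hb (.head hps (.single hsb)) hbw
  · exact h1.not_adj_of_reach h2 hne hs hb (.single hsb) hbw

theorem forall_adj_or_isTerminalSC (hloop : ∀ v, ¬ D v v) (hstar : StarCond D)
    (h1 : IsSC D C1) (h2 : IsSC D C2) (hne : C1 ≠ C2) {b : V} (hu : u ∈ C1) (hb : b ∈ C2)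
    (hub : D u b) : (∀ c ∈ C2, D u c) ∨ (IsTerminalSC D C2 ∧ C2.ncard ≤ 2) := by
  refine or_iff_not_imp_left.2 fun hall => ?_
  push Not at hall
  obtain ⟨c, hc, huc⟩ := hall
  obtain ⟨q, z, hbq, hqz, hzc, huq, huz⟩ := (h2.reach hb hc).exists_step_of_not hub huc
  have hq : q ∈ C2 := h2.mem_of_reach hb hc hbq (.head hqz hzc)
  have hz : z ∈ C2 := h2.mem_of_reach hb hc (hbq.tail hqz) hzc
  have huz' : u ≠ z := (h1.disjoint h2 hne).ne_of_mem hu hz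
  refine h2.isTerminalSC_and_ncard_le_two hq hz (fun y hqy => ?_) (fun y hzy => ?_)
  · rcases hstar.eq_or_eq_of_adj_mid hloop huq hqz huz' huz hqy with rfl | rfl
    · exact absurd hqy (h1.not_adj_of_reach h2 hne hu hq (.single huq))
    · rfl
  · rcases hstar.eq_or_eq_of_adj_last hloop huq hqz huz' huz hzy with rfl | rfl
    · exact absurd hzy (h1.not_adj_of_reach h2 hne hu hz (.head huq (.single hqz)))
    · rfl

theorem fullyConnects_or_isTerminalSC (hloop : ∀ v, ¬ D v v) (hstar : StarCond D)
    (h1 : IsSC D C1) (h2 : IsSC D C2) (hne : C1 ≠ C2) (hcon : ConnectsTo D C1 C2) :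
    FullyConnects D C1 C2 ∨ (IsTerminalSC D C2 ∧ C2.ncard ≤ 2) := by
  obtain ⟨a, ha, b, hb, hab⟩ := hcon
  by_cases hout : ∃ w, D b w
  · obtain ⟨w, hbw⟩ := hout
    have hall := forall_adj_of_adj_of_outNeighbor hloop hstar h1 h2 hne ha hb hab hbw
    refine or_iff_not_imp_right.2 fun hsmall v hv => ?_
    exact (forall_adj_or_isTerminalSC hloop hstar h1 h2 hne hv hb (hall v hv)).resolve_right hsmall
  · push Not at hout
    exact .inr (h2.isTerminalSC_and_ncard_le_two hb hb (fun y hy => absurd hy (hout y))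
      (fun y hy => absurd hy (hout y)))

theorem IsSC.subset_pair_of_adj (hloop : ∀ v, ¬ D v v) (hclosed : ClosedDigraph D)
    (hstar : StarCond D) (h : IsSC D C) {p s b : V} (hp : p ∈ C) (hs : s ∈ C) (hb : b ∉ C)
    (hps : D p s) (hsb : D s b) (hpb : ¬ D p b) : C ⊆ {p, s} := by
  have hpb' : p ≠ b := fun h => hb (h ▸ hp)
  have hsout : ∀ y, D s y → y = p ∨ y = b := fun y =>
    hstar.eq_or_eq_of_adj_mid hloop hps hsb hpb' hpb
  intro t ht
  by_contra hts
  obtain ⟨x, y, hsx, hxy, hyt, hx, hy⟩ :=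
    (h.reach hs ht).exists_step_of_not (P := (· ∈ ({p, s} : Set V))) (by simp) hts
  have hyC : y ∈ C := h.mem_of_reach hs ht (hsx.tail hxy) hyt
  simp only [Set.mem_insert_iff, Set.mem_singleton_iff, not_or] at hx hy
  rcases hx with rfl | rfl
  · have hyx : D y x := hclosed y x hxy (h.reach hyC hp)
    have hys : ¬ D y s := fun hys =>
      (hsout y (hclosed s y hys (h.reach hs hyC))).elim hy.1 fun h => hb (h ▸ hyC)
    rcases hstar.eq_or_eq_of_adj_last hloop hyx hps hy.2 hys hsb with rfl | rfl
    · exact hb hyC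
    · exact hb hp
  · exact (hsout y hxy).elim hy.1 fun h => hb (h ▸ hyC)

theorem fullyConnects_of_ncard_eq_one (hloop : ∀ v, ¬ D v v) (hclosed : ClosedDigraph D)
    (hstar : StarCond D) (h1 : IsSC D C1) (h2 : IsSC D C2) (hne : C1 ≠ C2)
    (hcon : ConnectsTo D C1 C2) (hC2 : C2.ncard = 1)
    (hdeg : C1.ncard ≠ 2 ∨ ∃ v1 ∈ C1, (∃ v2 ∈ C2, D v1 v2) ∧ 3 ≤ Set.ncard {u | D v1 u}) :
    FullyConnects D C1 C2 := by
  obtain ⟨b, rfl⟩ := Set.ncard_eq_one.1 hC2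
  obtain ⟨a, ha, b', hb', hab⟩ := hcon
  rw [Set.mem_singleton_iff.1 hb'] at hab
  have hb : b ∉ C1 := Set.disjoint_right.1 (h1.disjoint h2 hne) rfl
  intro u hu v hv
  rw [Set.mem_singleton_iff.1 hv]
  by_contra hub
  obtain ⟨p, hp, s, hs, hps, hpb, hsb⟩ := h1.exists_crossing_adj hu ha hub hab
  have hC1 : C1 = {p, s} :=
    (h1.subset_pair_of_adj hloop hclosed hstar hp hs hb hps hsb hpb).antisymm
      (Set.insert_subset hp (Set.singleton_subset_iff.2 hs))
  have hps' : p ≠ s := fun h => hloop p (h ▸ hps)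
  obtain ⟨v, hv, ⟨b', hb', hvb⟩, hdeg⟩ :=
    hdeg.resolve_left (not_not.2 (hC1 ▸ Set.ncard_pair hps'))
  rw [Set.mem_singleton_iff.1 hb'] at hvb
  rw [hC1] at hv
  rcases hv with rfl | rfl
  · exact hpb hvb
  · have hout : {y | D v y} ⊆ {p, b} := fun y =>
      hstar.eq_or_eq_of_adj_mid hloop hps hvb (fun h => hb (h ▸ hp)) hpb
    have := Set.ncard_le_two_of_subset_pair hout
    omega

theorem fullyConnects_of_ncard_eq_two (hloop : ∀ v, ¬ D v v) (hstar : StarCond D)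
    (h1 : IsSC D C1) (h2 : IsSC D C2) (hne : C1 ≠ C2) (hC2 : C2.ncard = 2)
    (hsplit : ¬ ∃ w ∈ C2, ∀ v1 ∈ C1, ∀ v2 ∈ C2, D v1 v2 → v2 = w) :
    FullyConnects D C1 C2 := by
  obtain ⟨b, c, hbc, rfl⟩ := Set.ncard_eq_two.1 hC2
  have hb : b ∈ ({b, c} : Set V) := by simp
  have hc : c ∈ ({b, c} : Set V) := by simp
  have hEb : ∃ a ∈ C1, D a b := by
    by_contra! hno
    refine hsplit ⟨c, hc, fun v1 hv1 v2 hv2 hd => ?_⟩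
    rcases hv2 with rfl | rfl
    · exact absurd hd (hno v1 hv1)
    · rfl
  have hEc : ∃ a ∈ C1, D a c := by
    by_contra! hno
    refine hsplit ⟨b, hb, fun v1 hv1 v2 hv2 hd => ?_⟩
    rcases hv2 with rfl | rfl
    · rfl
    · exact absurd hd (hno v1 hv1)
  obtain ⟨a, ha, hab⟩ := hEb
  obtain ⟨a', ha', hac⟩ := hEc
  obtain ⟨w, hbw⟩ := h2.exists_adj_of_ne hb hc hbc
  obtain ⟨w', hcw'⟩ := h2.exists_adj_of_ne hc hb hbc.symm
  rintro v hv _ (rfl | rfl)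
  · exact forall_adj_of_adj_of_outNeighbor hloop hstar h1 h2 hne ha hb hab hbw v hv
  · exact forall_adj_of_adj_of_outNeighbor hloop hstar h1 h2 hne ha' hc hac hcw' v hv

end

theorem stmt6_general {V : Type*} (D : V → V → Prop) (hloop : ∀ v, ¬ D v v)
    (hclosed : ClosedDigraph D) (hstar : StarCond D) (C1 C2 : Set V)
    (h1 : IsSC D C1) (h2 : IsSC D C2) (hne : C1 ≠ C2) (hcon : ConnectsTo D C1 C2) :
    (¬ IsTerminalSC D C2 → FullyConnects D C1 C2) ∧
    (C2.ncard = 1 →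
      (C1.ncard ≠ 2 ∨ ∃ v1 ∈ C1, (∃ v2 ∈ C2, D v1 v2) ∧ 3 ≤ Set.ncard {u | D v1 u}) →
      FullyConnects D C1 C2) ∧
    (C2.ncard = 2 →
      (¬ ∃ w ∈ C2, ∀ v1 ∈ C1, ∀ v2 ∈ C2, D v1 v2 → v2 = w) →
      FullyConnects D C1 C2) ∧
    (3 ≤ C2.ncard → FullyConnects D C1 C2) := by
  have key := fullyConnects_or_isTerminalSC hloop hstar h1 h2 hne hcon
  refine ⟨fun hnt => key.resolve_right fun h => hnt h.1,
    fullyConnects_of_ncard_eq_one hloop hclosed hstar h1 h2 hne hcon,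
    fullyConnects_of_ncard_eq_two hloop hstar h1 h2 hne,
    fun h3 => key.resolve_right fun h => ?_⟩
  omega

/-- connections between strong components of a closed digraph with (★). -/
theorem stmt6 {V : Type*} [Fintype V] (D : V → V → Prop) (hloop : ∀ v, ¬ D v v)
    (hclosed : ClosedDigraph D) (hstar : StarCond D) (C1 C2 : Set V)
    (h1 : IsSC D C1) (h2 : IsSC D C2) (hne : C1 ≠ C2) (hcon : ConnectsTo D C1 C2) :
    (¬ IsTerminalSC D C2 → FullyConnects D C1 C2) ∧
    (C2.ncard = 1 →
      (C1.ncard ≠ 2 ∨ ∃ v1 ∈ C1, (∃ v2 ∈ C2, D v1 v2) ∧ 3 ≤ Set.ncard {u | D v1 u}) →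
      FullyConnects D C1 C2) ∧
    (C2.ncard = 2 →
      (¬ ∃ w ∈ C2, ∀ v1 ∈ C1, ∀ v2 ∈ C2, D v1 v2 → v2 = w) →
      FullyConnects D C1 C2) ∧
    (3 ≤ C2.ncard → FullyConnects D C1 C2) :=
  stmt6_general D hloop hclosed hstar C1 C2 h1 h2 hne hcon
end
end

section
/- Let D be a closed simple digraph satisfying property (★), and let C1, C2, C3 be pairwise distinct strong components of D such that C1 connects to C2 and C2 connects to C3. If C1 does not connect to C3, then |C2| = |C3| = 1, C3 is a terminal strong component of D, and C2 is a terminal strong component of the induced subdigraph of D on the vertices outside C3. -/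
noncomputable section

variable {V : Type*}

section Stmt7Aux

open Relation

/-- Walks of length `n`. -/
def stmt7ReachN (D : V → V → Prop) : ℕ → V → V → Prop
  | 0, x, y => x = y
  | n+1, x, y => ∃ z, D x z ∧ stmt7ReachN D n z y

lemma stmt7ReachN_snoc {D : V → V → Prop} :
    ∀ {n : ℕ} {x y z : V}, stmt7ReachN D n x y → D y z → stmt7ReachN D (n+1) x z := by
  intro n
  induction n with
  | zero =>
    intro x y z h hd
    exact ⟨z, h ▸ hd, rfl⟩
  | succ n ih =>
    rintro x y z ⟨w, hw, hr⟩ hd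
    exact ⟨w, hw, ih hr hd⟩

lemma stmt7_rtg_reachN {D : V → V → Prop} {x y : V} (h : Relation.ReflTransGen D x y) :
    ∃ n, stmt7ReachN D n x y := by
  induction h with
  | refl => exact ⟨0, rfl⟩
  | tail _ hd ih =>
    obtain ⟨n, hn⟩ := ih
    exact ⟨n+1, stmt7ReachN_snoc hn hd⟩

lemma stmt7ReachN_last {D : V → V → Prop} :
    ∀ {n : ℕ} {x y : V}, stmt7ReachN D (n+1) x y → ∃ z, stmt7ReachN D n x z ∧ D z y := by
  intro n
  induction n with
  | zero =>
    rintro x y ⟨z, hz, hr⟩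
    exact ⟨x, rfl, hr ▸ hz⟩
  | succ n ih =>
    rintro x y ⟨z, hz, hr⟩
    obtain ⟨w, hw, hd⟩ := ih hr
    exact ⟨w, ⟨z, hz, hw⟩, hd⟩

lemma stmt7_rtg_sink {D : V → V → Prop} {x u : V} (hs : ∀ z, ¬ D x z)
    (h : Relation.ReflTransGen D x u) : u = x := by
  rcases Relation.ReflTransGen.cases_head h with h | ⟨z, hz, _⟩
  · exact h.symm
  · exact absurd hz (hs z)

lemma stmt7_sc_eq {D : V → V → Prop} {A B : Set V} (hA : IsSC D A) (hB : IsSC D B)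
    {x : V} (hxA : x ∈ A) (hxB : x ∈ B) : A = B := by
  obtain ⟨a, rfl⟩ := hA
  obtain ⟨b, rfl⟩ := hB
  obtain ⟨hxa1, hxa2⟩ := hxA
  obtain ⟨hxb1, hxb2⟩ := hxB
  ext u
  constructor
  · rintro ⟨hu1, hu2⟩
    exact ⟨(hu1.trans hxa2).trans hxb1, (hxb2.trans hxa1).trans hu2⟩
  · rintro ⟨hu1, hu2⟩
    exact ⟨(hu1.trans hxb2).trans hxa1, (hxa2.trans hxb1).trans hu2⟩

lemma stmt7_exists_exit {D : V → V → Prop} {Q : V → Prop} {s t : V}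
    (h : Relation.ReflTransGen D s t) (hs : Q s) :
    ¬ Q t → ∃ a b, Relation.ReflTransGen D s a ∧ Q a ∧ ¬ Q b ∧ D a b ∧
      Relation.ReflTransGen D b t := by
  induction h with
  | refl => exact fun ht => absurd hs ht
  | @tail u v hsu hd ih =>
    intro ht
    by_cases hQu : Q u
    · exact ⟨u, v, hsu, hQu, ht, hd, Relation.ReflTransGen.refl⟩
    · obtain ⟨a, b, h1, h2, h3, h4, h5⟩ := ih hQu
      exact ⟨a, b, h1, h2, h3, h4, h5.tail hd⟩

lemma stmt7_reach_pair {D : V → V → Prop} {a b w : V}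
    (ha : ∀ u, D a u → u = b) (hb : ∀ u, D b u → u = a)
    (h : Relation.ReflTransGen D b w) : w = a ∨ w = b := by
  induction h with
  | refl => exact Or.inr rfl
  | @tail u v _ hd ih =>
    rcases ih with h | h
    · exact Or.inr (ha v (h ▸ hd))
    · exact Or.inl (hb v (h ▸ hd))

end Stmt7Aux

/-- if `C1` connects to `C2`, `C2` connects to `C3`, but `C1` does not connect
to `C3`, then `|C2| = |C3| = 1`, `C3` is terminal in `D`, and `C2` is terminal in the
induced subdigraph of `D` on the vertices outside `C3`. -/
theorem stmt7 {V : Type*} [Fintype V] (D : V → V → Prop) (hloop : ∀ v, ¬ D v v)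
    (hclosed : ClosedDigraph D) (hstar : StarCond D) (C1 C2 C3 : Set V)
    (h1 : IsSC D C1) (h2 : IsSC D C2) (h3 : IsSC D C3)
    (h12 : C1 ≠ C2) (h13 : C1 ≠ C3) (h23 : C2 ≠ C3)
    (hc12 : ConnectsTo D C1 C2) (hc23 : ConnectsTo D C2 C3)
    (hnc13 : ¬ ConnectsTo D C1 C3) :
    C2.ncard = 1 ∧ C3.ncard = 1 ∧ IsTerminalSC D C3 ∧
      IsTerminalSC (fun x y => D x y ∧ x ∉ C3 ∧ y ∉ C3) C2 := by
  classical
  obtain ⟨v1, hv1, v2, hv2, hd12⟩ := hc12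
  obtain ⟨w2, hw2, w3, hw3, hd23⟩ := hc23
  have hnc : ∀ a ∈ C1, ∀ b ∈ C3, ¬ D a b := fun a ha b hb h => hnc13 ⟨a, ha, b, hb, h⟩
  obtain ⟨r2, hC2r⟩ := h2
  have h2' : IsSC D C2 := ⟨r2, hC2r⟩
  have hmem2 : ∀ x, x ∈ C2 ↔ (Relation.ReflTransGen D x r2 ∧ Relation.ReflTransGen D r2 x) := by
    intro x; rw [hC2r]; exact Iff.rfl
  have hrtg2 : ∀ x ∈ C2, ∀ y ∈ C2, Relation.ReflTransGen D x y := by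
    intro x hx y hy
    exact ((hmem2 x).1 hx).1.trans ((hmem2 y).1 hy).2
  have hmemC2 : ∀ x ∈ C2, ∀ y, Relation.ReflTransGen D x y → Relation.ReflTransGen D y x →
      y ∈ C2 := by
    intro x hx y hxy hyx
    have hx' := (hmem2 x).1 hx
    exact (hmem2 y).2 ⟨hyx.trans hx'.1, hx'.2.trans hxy⟩
  have hdisj12 : ∀ x ∈ C1, x ∉ C2 := fun x hx1 hx2 => h12 (stmt7_sc_eq h1 h2' hx1 hx2)
  have hdisj13 : ∀ x ∈ C1, x ∉ C3 := fun x hx1 hx3 => h13 (stmt7_sc_eq h1 h3 hx1 hx3)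
  have hdisj23 : ∀ x ∈ C2, x ∉ C3 := fun x hx2 hx3 => h23 (stmt7_sc_eq h2' h3 hx2 hx3)
  -- shortest walk from v1 into C3
  set S : Set ℕ := {n | ∃ u, u ∈ C3 ∧ stmt7ReachN D n v1 u} with hS
  have hSne : S.Nonempty := by
    have h1r : Relation.ReflTransGen D v1 w3 :=
      (Relation.ReflTransGen.single hd12).trans ((hrtg2 v2 hv2 w2 hw2).tail hd23)
    obtain ⟨n, hn⟩ := stmt7_rtg_reachN h1r
    exact ⟨n, w3, hw3, hn⟩
  obtain ⟨c, hcC3, hreach⟩ := Nat.sInf_mem hSne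
  have hmin : ∀ k, (∃ u, u ∈ C3 ∧ stmt7ReachN D k v1 u) → sInf S ≤ k :=
    fun k hk => Nat.sInf_le hk
  have hne0 : sInf S ≠ 0 := by
    intro h0
    rw [h0] at hreach
    have hv1c : v1 = c := hreach
    exact hdisj13 v1 hv1 (by rw [hv1c]; exact hcC3)
  have hne1 : sInf S ≠ 1 := by
    intro h0
    rw [h0] at hreach
    obtain ⟨z, hz, hz0⟩ := hreach
    have hz0' : z = c := hz0
    exact hnc v1 hv1 c hcC3 (hz0' ▸ hz)
  obtain ⟨m, hm⟩ : ∃ m, sInf S = m + 2 := by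
    rcases h : sInf S with _ | n
    · exact absurd h hne0
    · rcases n with _ | m
      · exact absurd h hne1
      · exact ⟨m, rfl⟩
  rw [hm] at hreach
  obtain ⟨q1, hq1r, hq1c⟩ := stmt7ReachN_last hreach
  obtain ⟨q0, hq0r, hq01⟩ := stmt7ReachN_last hq1r
  have hnq0c : ¬ D q0 c := by
    intro h
    have hle : sInf S ≤ m + 1 := hmin _ ⟨c, hcC3, stmt7ReachN_snoc hq0r h⟩
    rw [hm] at hle; omega
  have hq0nec : q0 ≠ c := by
    intro h
    have hle : sInf S ≤ m := hmin _ ⟨c, hcC3, h ▸ hq0r⟩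
    rw [hm] at hle; omega
  have hstar1 := hstar q0 q1 c hq01 hq1c hq0nec hnq0c
  -- c is a sink of D
  have hsink : ∀ u, ¬ D c u := by
    intro u hu
    rcases hstar1 u (Or.inr hu) with h | h | h
    · exact hnq0c (hclosed q0 c (h ▸ hu)
        ((Relation.ReflTransGen.single hq01).tail hq1c))
    · -- u = q1 : then q1 ∈ C3, contradicting minimality
      obtain ⟨r3, hC3r⟩ := id h3
      have hcm : c ∈ C3 := hcC3
      rw [hC3r] at hcm
      have hq1C3 : q1 ∈ C3 := by
        rw [hC3r]
        exact ⟨(Relation.ReflTransGen.single hq1c).trans hcm.1, hcm.2.tail (h ▸ hu)⟩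
      have hle : sInf S ≤ m + 1 := hmin _ ⟨q1, hq1C3, hq1r⟩
      rw [hm] at hle; omega
    · exact hloop c (h ▸ hu)
  -- C3 = {c}
  have hC3eq : C3 = {c} := by
    obtain ⟨r3, hC3r⟩ := id h3
    have hcm : c ∈ C3 := hcC3
    rw [hC3r] at hcm
    ext u
    simp only [Set.mem_singleton_iff]
    constructor
    · intro hu
      rw [hC3r] at hu
      exact stmt7_rtg_sink hsink (hcm.1.trans hu.2)
    · rintro rfl; exact hcC3
  have hw3c : w3 = c := by rw [hC3eq] at hw3; exact hw3
  have hd23' : D w2 c := hw3c ▸ hd23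
  have hv1nec : v1 ≠ c := fun h => hdisj13 v1 hv1 (by rw [h]; exact hcC3)
  -- Step 1 : D v1 w2
  have hv1w2 : D v1 w2 := by
    by_contra hnot
    obtain ⟨a, b, hra, hQa, hQb, hab, hbw2⟩ :=
      stmt7_exists_exit (Q := fun t => D v1 t) (hrtg2 v2 hv2 w2 hw2) hd12 hnot
    have haC2 : a ∈ C2 := hmemC2 v2 hv2 a hra
      ((Relation.ReflTransGen.single hab).trans (hbw2.trans (hrtg2 w2 hw2 v2 hv2)))
    have hbC2 : b ∈ C2 := hmemC2 v2 hv2 b (hra.tail hab)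
      (hbw2.trans (hrtg2 w2 hw2 v2 hv2))
    have hv1neb : v1 ≠ b := fun h => hdisj12 v1 hv1 (h.symm ▸ hbC2)
    have hstar2 := hstar v1 a b hQa hab hv1neb hQb
    have hrv1a : Relation.ReflTransGen D v1 a := (Relation.ReflTransGen.single hd12).trans hra
    have hav1 : ∀ u, D a u → u = b := by
      intro u hu
      rcases hstar2 u (Or.inl hu) with h | h | h
      · exact absurd (hmemC2 a haC2 v1 (Relation.ReflTransGen.single (h ▸ hu)) hrv1a)
          (hdisj12 v1 hv1)
      · exact absurd (h ▸ hu) (hloop a)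
      · exact h
    have hbv1 : ∀ u, D b u → u = a := by
      intro u hu
      rcases hstar2 u (Or.inr hu) with h | h | h
      · exact absurd (hmemC2 b hbC2 v1 (Relation.ReflTransGen.single (h ▸ hu)) (hrv1a.tail hab))
          (hdisj12 v1 hv1)
      · exact h
      · exact absurd (h ▸ hu) (hloop b)
    rcases stmt7_reach_pair hav1 hbv1 hbw2 with h | h
    · exact hnot (h.symm ▸ hQa)
    · have hca : c = a := hbv1 c (h ▸ hd23')
      exact hdisj23 a haC2 (hca ▸ hcC3)
  have hstar3 := hstar v1 w2 c hv1w2 hd23' hv1nec (hnc v1 hv1 c hcC3)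
  -- Step 2 : C2 = {w2}
  have hC2eq : C2 = {w2} := by
    ext x
    simp only [Set.mem_singleton_iff]
    constructor
    · intro hx
      by_contra hne
      have hrw2x : Relation.ReflTransGen D w2 x := hrtg2 w2 hw2 x hx
      rcases Relation.ReflTransGen.cases_head hrw2x with heq | ⟨u, hu, hux⟩
      · exact hne heq.symm
      · have huC2 : u ∈ C2 := hmemC2 w2 hw2 u (Relation.ReflTransGen.single hu)
          (hux.trans (hrtg2 x hx w2 hw2))
        rcases hstar3 u (Or.inl hu) with h | h | h
        · exact hdisj12 v1 hv1 (h ▸ huC2)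
        · exact hloop w2 (h ▸ hu)
        · exact hdisj23 u huC2 (by rw [h]; exact hcC3)
    · rintro rfl; exact hw2
  -- out-neighbours of w2
  have hw2out : ∀ u, D w2 u → u = c := by
    intro u hu
    rcases hstar3 u (Or.inl hu) with h | h | h
    · exact absurd (stmt7_sc_eq h1 h2' hv1
        (hmemC2 w2 hw2 v1 (Relation.ReflTransGen.single (h ▸ hu))
          (Relation.ReflTransGen.single hv1w2))) h12
    · exact absurd (h ▸ hu) (hloop w2)
    · exact h
  have hw2sink : ∀ u, ¬ (D w2 u ∧ w2 ∉ C3 ∧ u ∉ C3) := by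
    rintro u ⟨hu, -, huC3⟩
    exact huC3 (by rw [hw2out u hu]; exact hcC3)
  refine ⟨by rw [hC2eq]; exact Set.ncard_singleton w2,
    by rw [hC3eq]; exact Set.ncard_singleton c, ⟨h3, ?_⟩, ⟨w2, ?_⟩, ?_⟩
  · -- C3 terminal in D
    rintro C' _ _ ⟨a, haC3, b, -, hab⟩
    rw [hC3eq] at haC3
    exact hsink b ((Set.mem_singleton_iff.mp haC3) ▸ hab)
  · -- C2 is a strong component of the restriction
    rw [hC2eq]
    ext u
    simp only [Set.mem_singleton_iff, Set.mem_setOf_eq]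
    constructor
    · rintro rfl
      exact ⟨Relation.ReflTransGen.refl, Relation.ReflTransGen.refl⟩
    · rintro ⟨-, h2r⟩
      exact stmt7_rtg_sink hw2sink h2r
  · -- C2 terminal in the restriction
    rintro C' _ _ ⟨a, haC2, b, -, hab⟩
    rw [hC2eq] at haC2
    exact hw2sink b ((Set.mem_singleton_iff.mp haC2) ▸ hab)
end
end

section
/- Let D be a closed connected simple digraph on {1,…,n} with n ≥ 2 satisfying property (★). Then D satisfies property (★★) if and only if D has no subdigraph isomorphic to Γ1, Γ2, Γ3, Γ4, or to the directed cycle Θ_k for any k ≥ 5. -/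
noncomputable section

variable {V : Type*}

private lemma auxExtract {V : Type*} {D : V → V → Prop} {P : V → Prop} {z : V} (hz : ¬ P z) :
    ∀ {u : V}, Relation.ReflTransGen D u z → P u →
      ∃ a c, D a c ∧ P a ∧ ¬ P c ∧ Relation.ReflTransGen D u a ∧ Relation.ReflTransGen D c z := by
  intro u h
  induction h using Relation.ReflTransGen.head_induction_on with
  | refl => exact fun hu => absurd hu hz
  | @head s t h h' ih =>
    intro hu
    by_cases hw : P t
    · obtain ⟨a, c, hac, ha, hc, hua, hcz⟩ := ih hw
      exact ⟨a, c, hac, ha, hc, Relation.ReflTransGen.head h hua, hcz⟩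
    · exact ⟨_, _, h, hu, hw, Relation.ReflTransGen.refl, h'⟩

private lemma auxAvoid {V : Type*} {C S : Set V} (hS : S.Finite) (h : S.ncard < C.ncard) :
    ∃ z ∈ C, z ∉ S := by
  by_contra hcon
  push_neg at hcon
  exact absurd (Set.ncard_le_ncard hcon hS) (not_le.mpr h)

private lemma auxNcard3 {V : Type*} {C : Set V} (hfin : C.Finite) {a b c : V} (hab : a ≠ b)
    (hac : a ≠ c) (hbc : b ≠ c) (ha : a ∈ C) (hb : b ∈ C) (hc : c ∈ C) : 3 ≤ C.ncard := by
  have hsub : ({a, b, c} : Set V) ⊆ C := by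
    intro x hx
    simp only [Set.mem_insert_iff, Set.mem_singleton_iff] at hx
    rcases hx with rfl | rfl | rfl <;> assumption
  have h3 : ({a, b, c} : Set V).ncard = 3 := by
    rw [Set.ncard_insert_of_notMem (by simp [hab, hac]) ((Set.finite_singleton c).insert b),
      Set.ncard_pair hbc]
  exact h3 ▸ Set.ncard_le_ncard hsub hfin

private lemma auxNcard4 {V : Type*} {C : Set V} (hfin : C.Finite) {a b c d : V} (hab : a ≠ b)
    (hac : a ≠ c) (had : a ≠ d) (hbc : b ≠ c) (hbd : b ≠ d) (hcd : c ≠ d)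
    (ha : a ∈ C) (hb : b ∈ C) (hc : c ∈ C) (hd : d ∈ C) : 4 ≤ C.ncard := by
  have hsub : ({a, b, c, d} : Set V) ⊆ C := by
    intro x hx
    simp only [Set.mem_insert_iff, Set.mem_singleton_iff] at hx
    rcases hx with rfl | rfl | rfl | rfl <;> assumption
  have h4 : ({a, b, c, d} : Set V).ncard = 4 := by
    rw [Set.ncard_insert_of_notMem (by simp [hab, hac, had])
        (((Set.finite_singleton d).insert c).insert b),
      Set.ncard_insert_of_notMem (by simp [hbc, hbd]) ((Set.finite_singleton d).insert c),
      Set.ncard_pair hcd]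
  exact h4 ▸ Set.ncard_le_ncard hsub hfin

private lemma auxGamma3of {n : ℕ} {D : Fin n → Fin n → Prop} {a b c d : Fin n}
    (hab : a ≠ b) (hac : a ≠ c) (had : a ≠ d) (hbc : b ≠ c) (hbd : b ≠ d) (hcd : c ≠ d)
    (e1 : D a b) (e2 : D b c) (e3 : D c a) (e4 : D c d) : HasSubdigraph D Gamma3 := by
  refine ⟨![a, b, c, d], ?_, ?_⟩
  · intro i j hij
    fin_cases i <;> fin_cases j <;> simp_all
  · intro i j hij
    fin_cases i <;> fin_cases j <;> simp [Gamma3, Prod.ext_iff] at hij ⊢ <;> assumption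

private lemma auxRev {n : ℕ} {D : Fin n → Fin n → Prop} (hloop : ∀ v, ¬ D v v)
    (hclosed : ClosedDigraph D) (hstar : StarCond D) (hss : ¬ StarStarCond D) :
    HasSubdigraph D Gamma3 := by
  have hex : ∃ C, IsSC D C ∧
      ¬ ((IsTerminalSC D C → C.ncard ≤ 3) ∧ (¬ IsTerminalSC D C → C.ncard ≤ 2)) := by
    by_contra h
    push_neg at h
    exact hss h
  obtain ⟨C, hCsc, hbad⟩ := hex
  obtain ⟨v0, hv0⟩ := hCsc
  have hmem : ∀ p, p ∈ C ↔
      (Relation.ReflTransGen D p v0 ∧ Relation.ReflTransGen D v0 p) := fun p => by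
    rw [hv0]; exact Iff.rfl
  have hsym : ∀ u ∈ C, ∀ w ∈ C, D u w → D w u := fun u hu w hw h =>
    hclosed w u h (((hmem w).1 hw).1.trans ((hmem u).1 hu).2)
  have hbtw : ∀ s ∈ C, ∀ t ∈ C, ∀ p, Relation.ReflTransGen D s p →
      Relation.ReflTransGen D p t → p ∈ C :=
    fun s hs t ht p h1 h2 =>
      (hmem p).2 ⟨h2.trans ((hmem t).1 ht).1, ((hmem s).1 hs).2.trans h1⟩
  have hreach : ∀ s ∈ C, ∀ t ∈ C, Relation.ReflTransGen D s t := fun s hs t ht =>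
    ((hmem s).1 hs).1.trans ((hmem t).1 ht).2
  by_cases hT : IsTerminalSC D C
  · -- terminal, so 4 ≤ C.ncard; show C is a clique and extract Γ3
    have h4 : 4 ≤ C.ncard := by
      by_contra h4
      exact hbad ⟨fun _ => by omega, fun hnt => absurd hT hnt⟩
    have hclq : ∀ u ∈ C, ∀ v ∈ C, u ≠ v → D u v := by
      intro u hu v hv huv
      by_contra hDuv
      obtain ⟨a, c, hac, hPa, hPc, hua, hcv⟩ :=
        auxExtract (P := fun z => z = u ∨ D u z)
          (by rintro (rfl | h); exacts [huv rfl, hDuv h]) (hreach u hu v hv) (Or.inl rfl)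
      have haC : a ∈ C := hbtw u hu v hv a hua ((Relation.ReflTransGen.single hac).trans hcv)
      have hcC : c ∈ C := hbtw u hu v hv c (hua.trans (Relation.ReflTransGen.single hac)) hcv
      rcases hPa with rfl | hDua
      · exact hPc (Or.inr hac)
      · have hau : a ≠ u := fun h => hloop u (h ▸ hDua)
        have hcu : c ≠ u := fun h => hPc (Or.inl h)
        have hnuc : ¬ D u c := fun h => hPc (Or.inr h)
        have hncu : ¬ D c u := fun h => hnuc (hsym c hcC u hu h)
        have H1 := hstar u a c hDua hac (fun h => hcu h.symm) hnuc
        have H2 := hstar c a u (hsym a haC c hcC hac) (hsym u hu a haC hDua) hcu hncu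
        have hS1 := Set.ncard_insert_le a ({c} : Set (Fin n))
        have hS2 := Set.ncard_insert_le u ({a, c} : Set (Fin n))
        rw [Set.ncard_singleton] at hS1
        obtain ⟨d, hdC, hd⟩ := auxAvoid (C := C) (S := {u, a, c})
          (((Set.finite_singleton c).insert a).insert u) (by omega)
        simp only [Set.mem_insert_iff, Set.mem_singleton_iff, not_or] at hd
        obtain ⟨w, t, hwt, hPw, hPt, hdw, htu⟩ :=
          auxExtract (P := fun z => ¬ (z = u ∨ z = a ∨ z = c))
            (not_not_intro (Or.inl rfl)) (hreach d hdC u hu)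
            (by rintro (rfl | rfl | rfl); exacts [hd.1 rfl, hd.2.1 rfl, hd.2.2 rfl])
        have hwC : w ∈ C := hbtw d hdC u hu w hdw ((Relation.ReflTransGen.single hwt).trans htu)
        have htC : t ∈ C := hbtw d hdC u hu t (hdw.trans (Relation.ReflTransGen.single hwt)) htu
        have hDtw : D t w := hsym w hwC t htC hwt
        rcases not_not.mp hPt with rfl | rfl | rfl
        · rcases H2 w (Or.inr hDtw) with rfl | rfl | rfl
          · exact hPw (Or.inr (Or.inr rfl))
          · exact hPw (Or.inr (Or.inl rfl))
          · exact hPw (Or.inl rfl)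
        · exact hPw (H1 w (Or.inl hDtw))
        · exact hPw (H1 w (Or.inr hDtw))
    have hCne : C.Nonempty := Set.nonempty_of_ncard_ne_zero (by omega)
    obtain ⟨a, ha⟩ := hCne
    obtain ⟨b, hb, hba⟩ := auxAvoid (C := C) (Set.finite_singleton a)
      (by rw [Set.ncard_singleton]; omega)
    have hS1 := Set.ncard_insert_le a ({b} : Set (Fin n))
    rw [Set.ncard_singleton] at hS1
    obtain ⟨c, hc, hcab⟩ := auxAvoid (C := C) ((Set.finite_singleton b).insert a) (by omega)
    have hS2 := Set.ncard_insert_le b ({c} : Set (Fin n))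
    have hS3 := Set.ncard_insert_le a ({b, c} : Set (Fin n))
    rw [Set.ncard_singleton] at hS2
    obtain ⟨d, hd, hdabc⟩ := auxAvoid (C := C) (((Set.finite_singleton c).insert b).insert a)
      (by omega)
    simp only [Set.mem_singleton_iff] at hba
    simp only [Set.mem_insert_iff, Set.mem_singleton_iff, not_or] at hcab hdabc
    exact auxGamma3of (Ne.symm hba) (Ne.symm hcab.1) (Ne.symm hdabc.1) (Ne.symm hcab.2)
      (Ne.symm hdabc.2.1) (Ne.symm hdabc.2.2)
      (hclq a ha b hb (Ne.symm hba)) (hclq b hb c hc (Ne.symm hcab.2))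
      (hclq c hc a ha hcab.1) (hclq c hc d hd (Ne.symm hdabc.2.2))
  · -- nonterminal, 3 ≤ C.ncard
    have h3 : 3 ≤ C.ncard := by
      by_contra h3
      exact hbad ⟨fun ht => absurd ht hT, fun _ => by omega⟩
    have hntc : ∃ C', IsSC D C' ∧ C' ≠ C ∧ ConnectsTo D C C' := by
      by_contra h
      push_neg at h
      exact hT ⟨⟨v0, hv0⟩, h⟩
    obtain ⟨C', hC'sc, hC'ne, x, hxC, y, hyC', hxy⟩ := hntc
    have hyC : y ∉ C := by
      intro hy
      apply hC'ne
      obtain ⟨v1, hv1⟩ := hC'sc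
      rw [hv1] at hyC'
      have hy' := (hmem y).1 hy
      rw [hv1, hv0]
      ext p
      simp only [Set.mem_setOf_eq]
      constructor
      · rintro ⟨h1, h2⟩
        exact ⟨h1.trans (hyC'.2.trans hy'.1), hy'.2.trans (hyC'.1.trans h2)⟩
      · rintro ⟨h1, h2⟩
        exact ⟨h1.trans (hy'.2.trans hyC'.1), hyC'.2.trans (hy'.1.trans h2)⟩
    have key : ∀ p q r : Fin n, p ∈ C → q ∈ C → r ∈ C → p ≠ q → q ≠ r → p ≠ r →
        D p q → D q r → (x = p ∨ x = q ∨ x = r) → HasSubdigraph D Gamma3 := by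
      intro p q r pC qC rC hpq hqr hpr e1 e2 hx
      have hyp : y ≠ p := fun h => hyC (h ▸ pC)
      have hyq : y ≠ q := fun h => hyC (h ▸ qC)
      have hyr : y ≠ r := fun h => hyC (h ▸ rC)
      by_cases hDpr : D p r
      · have e3 : D r p := hsym p pC r rC hDpr
        rcases hx with rfl | rfl | rfl
        · exact auxGamma3of hqr (Ne.symm hpq) (Ne.symm hyq) (Ne.symm hpr) (Ne.symm hyr)
            (Ne.symm hyp) e2 e3 e1 hxy
        · exact auxGamma3of (Ne.symm hpr) (Ne.symm hqr) (Ne.symm hyr) hpq (Ne.symm hyp)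
            (Ne.symm hyq) e3 e1 e2 hxy
        · exact auxGamma3of hpq hpr (Ne.symm hyp) hqr (Ne.symm hyq) (Ne.symm hyr)
            e1 e2 e3 hxy
      · exfalso
        have hDrp : ¬ D r p := fun h => hDpr (hsym r rC p pC h)
        have H1 := hstar p q r e1 e2 hpr hDpr
        have H2 := hstar r q p (hsym q qC r rC e2) (hsym p pC q qC e1) (Ne.symm hpr) hDrp
        rcases hx with rfl | rfl | rfl
        · rcases H2 y (Or.inr hxy) with rfl | rfl | rfl
          exacts [hyC rC, hyC qC, hyC pC]
        · rcases H1 y (Or.inl hxy) with rfl | rfl | rfl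
          exacts [hyC pC, hyC qC, hyC rC]
        · rcases H1 y (Or.inr hxy) with rfl | rfl | rfl
          exacts [hyC pC, hyC qC, hyC rC]
    obtain ⟨z0, hz0C, hz0x⟩ := auxAvoid (C := C) (Set.finite_singleton x)
      (by rw [Set.ncard_singleton]; omega)
    rw [Set.mem_singleton_iff] at hz0x
    obtain ⟨a', b, hDxb, hPa', hPb, _, hbz0⟩ :=
      auxExtract (P := fun w => w = x) hz0x (hreach x hxC z0 hz0C) rfl
    rw [hPa'] at hDxb
    have hbx : b ≠ x := hPb
    have hbC : b ∈ C := hbtw x hxC z0 hz0C b (Relation.ReflTransGen.single hDxb) hbz0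
    have hS1 := Set.ncard_insert_le x ({b} : Set (Fin n))
    rw [Set.ncard_singleton] at hS1
    obtain ⟨z, hzC, hz⟩ := auxAvoid (C := C) ((Set.finite_singleton b).insert x) (by omega)
    simp only [Set.mem_insert_iff, Set.mem_singleton_iff, not_or] at hz
    obtain ⟨a, c, hDac, hPa, hPc, hba, hcz⟩ :=
      auxExtract (P := fun w => w = x ∨ w = b)
        (by rintro (h | h); exacts [hz.1 h, hz.2 h])
        (hreach b hbC z hzC) (Or.inr rfl)
    have haC : a ∈ C := hbtw b hbC z hzC a hba ((Relation.ReflTransGen.single hDac).trans hcz)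
    have hcC : c ∈ C := hbtw b hbC z hzC c (hba.trans (Relation.ReflTransGen.single hDac)) hcz
    have hcx : c ≠ x := fun h => hPc (Or.inl h)
    have hcb : c ≠ b := fun h => hPc (Or.inr h)
    rcases hPa with hax | hab'
    · exact key b x c hbC hxC hcC hbx (Ne.symm hcx) (Ne.symm hcb)
        (hsym x hxC b hbC hDxb) (hax ▸ hDac) (Or.inr (Or.inl rfl))
    · exact key x b c hxC hbC hcC (Ne.symm hbx) (Ne.symm hcb) (Ne.symm hcx)
        hDxb (hab' ▸ hDac) (Or.inl rfl)

/-- for a closed connected simple digraph `D` on `{1,…,n}`, `n ≥ 2`,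
satisfying (★), property (★★) holds iff `D` has no subdigraph isomorphic to `Γ1`, `Γ2`,
`Γ3`, `Γ4`, or `Θ_k` for any `k ≥ 5`. -/
theorem stmt9 (n : ℕ) (hn : 2 ≤ n) (D : Fin n → Fin n → Prop) (hloop : ∀ v, ¬ D v v)
    (hconn : ConnectedDigraph D) (hclosed : ClosedDigraph D) (hstar : StarCond D) :
    StarStarCond D ↔ ForbiddenFree D := by
  constructor
  · intro hss
    have hle3 : ∀ C : Set (Fin n), IsSC D C → C.ncard ≤ 3 := by
      intro C hC
      by_cases hT : IsTerminalSC D C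
      · exact (hss C hC).1 hT
      · exact ((hss C hC).2 hT).trans (by omega)
    have hfour : ∀ v0 a b c d : Fin n, a ≠ b → a ≠ c → a ≠ d → b ≠ c → b ≠ d → c ≠ d →
        (Relation.ReflTransGen D a v0 ∧ Relation.ReflTransGen D v0 a) →
        (Relation.ReflTransGen D b v0 ∧ Relation.ReflTransGen D v0 b) →
        (Relation.ReflTransGen D c v0 ∧ Relation.ReflTransGen D v0 c) →
        (Relation.ReflTransGen D d v0 ∧ Relation.ReflTransGen D v0 d) → False := by
      intro v0 a b c d hab hac had hbc hbd hcd ha hb hc hd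
      have h1 := hle3 {u | Relation.ReflTransGen D u v0 ∧ Relation.ReflTransGen D v0 u}
        ⟨v0, rfl⟩
      have h2 := auxNcard4 (Set.toFinite _) hab hac had hbc hbd hcd
        (show a ∈ {u | Relation.ReflTransGen D u v0 ∧ Relation.ReflTransGen D v0 u} from ha)
        hb hc hd
      omega
    refine ⟨?_, ?_, ?_, ?_, ?_⟩
    · rintro ⟨f, hinj, hf⟩
      have e03 : D (f 0) (f 3) := hf 0 3 (by unfold Gamma1; decide)
      have e30 : D (f 3) (f 0) := hf 3 0 (by unfold Gamma1; decide)
      have e13 : D (f 1) (f 3) := hf 1 3 (by unfold Gamma1; decide)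
      have e31 : D (f 3) (f 1) := hf 3 1 (by unfold Gamma1; decide)
      have e23 : D (f 2) (f 3) := hf 2 3 (by unfold Gamma1; decide)
      have e32 : D (f 3) (f 2) := hf 3 2 (by unfold Gamma1; decide)
      exact hfour (f 3) (f 0) (f 1) (f 2) (f 3)
        (hinj.ne (by decide)) (hinj.ne (by decide)) (hinj.ne (by decide))
        (hinj.ne (by decide)) (hinj.ne (by decide)) (hinj.ne (by decide))
        ⟨Relation.ReflTransGen.single e03, Relation.ReflTransGen.single e30⟩
        ⟨Relation.ReflTransGen.single e13, Relation.ReflTransGen.single e31⟩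
        ⟨Relation.ReflTransGen.single e23, Relation.ReflTransGen.single e32⟩
        ⟨Relation.ReflTransGen.refl, Relation.ReflTransGen.refl⟩
    · rintro ⟨f, hinj, hf⟩
      have e02 : D (f 0) (f 2) := hf 0 2 (by unfold Gamma2; decide)
      have e20 : D (f 2) (f 0) := hf 2 0 (by unfold Gamma2; decide)
      have e12 : D (f 1) (f 2) := hf 1 2 (by unfold Gamma2; decide)
      have e21 : D (f 2) (f 1) := hf 2 1 (by unfold Gamma2; decide)
      have e23 : D (f 2) (f 3) := hf 2 3 (by unfold Gamma2; decide)
      have e32 : D (f 3) (f 2) := hf 3 2 (by unfold Gamma2; decide)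
      exact hfour (f 2) (f 0) (f 1) (f 2) (f 3)
        (hinj.ne (by decide)) (hinj.ne (by decide)) (hinj.ne (by decide))
        (hinj.ne (by decide)) (hinj.ne (by decide)) (hinj.ne (by decide))
        ⟨Relation.ReflTransGen.single e02, Relation.ReflTransGen.single e20⟩
        ⟨Relation.ReflTransGen.single e12, Relation.ReflTransGen.single e21⟩
        ⟨Relation.ReflTransGen.refl, Relation.ReflTransGen.refl⟩
        ⟨Relation.ReflTransGen.single e32, Relation.ReflTransGen.single e23⟩
    · rintro ⟨f, hinj, hf⟩
      have e01 : D (f 0) (f 1) := hf 0 1 (by unfold Gamma3; decide)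
      have e12 : D (f 1) (f 2) := hf 1 2 (by unfold Gamma3; decide)
      have e20 : D (f 2) (f 0) := hf 2 0 (by unfold Gamma3; decide)
      have e23 : D (f 2) (f 3) := hf 2 3 (by unfold Gamma3; decide)
      have m1 : Relation.ReflTransGen D (f 1) (f 0) ∧ Relation.ReflTransGen D (f 0) (f 1) :=
        ⟨(Relation.ReflTransGen.single e12).trans (Relation.ReflTransGen.single e20),
          Relation.ReflTransGen.single e01⟩
      have m2 : Relation.ReflTransGen D (f 2) (f 0) ∧ Relation.ReflTransGen D (f 0) (f 2) :=
        ⟨Relation.ReflTransGen.single e20,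
          (Relation.ReflTransGen.single e01).trans (Relation.ReflTransGen.single e12)⟩
      by_cases h4 : Relation.ReflTransGen D (f 3) (f 0) ∧ Relation.ReflTransGen D (f 0) (f 3)
      · exact hfour (f 0) (f 0) (f 1) (f 2) (f 3)
          (hinj.ne (by decide)) (hinj.ne (by decide)) (hinj.ne (by decide))
          (hinj.ne (by decide)) (hinj.ne (by decide)) (hinj.ne (by decide))
          ⟨Relation.ReflTransGen.refl, Relation.ReflTransGen.refl⟩ m1 m2 h4
      · have hnt : ¬ IsTerminalSC D
            {u | Relation.ReflTransGen D u (f 0) ∧ Relation.ReflTransGen D (f 0) u} := by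
          rintro ⟨-, hterm⟩
          refine hterm {u | Relation.ReflTransGen D u (f 3) ∧ Relation.ReflTransGen D (f 3) u}
            ⟨f 3, rfl⟩ (fun he => h4 ?_)
            ⟨f 2, m2, f 3, ⟨Relation.ReflTransGen.refl, Relation.ReflTransGen.refl⟩, e23⟩
          have h33 : f 3 ∈ {u | Relation.ReflTransGen D u (f 3) ∧
              Relation.ReflTransGen D (f 3) u} :=
            ⟨Relation.ReflTransGen.refl, Relation.ReflTransGen.refl⟩
          rw [he] at h33
          exact h33
        have hle := (hss {u | Relation.ReflTransGen D u (f 0) ∧ Relation.ReflTransGen D (f 0) u}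
          ⟨f 0, rfl⟩).2 hnt
        have h3 := auxNcard3 (Set.toFinite _)
          (show f 0 ≠ f 1 from hinj.ne (by decide)) (hinj.ne (by decide))
          (hinj.ne (by decide))
          (show f 0 ∈ {u | Relation.ReflTransGen D u (f 0) ∧ Relation.ReflTransGen D (f 0) u}
            from ⟨Relation.ReflTransGen.refl, Relation.ReflTransGen.refl⟩) m1 m2
        omega
    · rintro ⟨f, hinj, hf⟩
      have e01 : D (f 0) (f 1) := hf 0 1 (by unfold Gamma4; decide)
      have e12 : D (f 1) (f 2) := hf 1 2 (by unfold Gamma4; decide)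
      have e23 : D (f 2) (f 3) := hf 2 3 (by unfold Gamma4; decide)
      have e30 : D (f 3) (f 0) := hf 3 0 (by unfold Gamma4; decide)
      exact hfour (f 0) (f 0) (f 1) (f 2) (f 3)
        (hinj.ne (by decide)) (hinj.ne (by decide)) (hinj.ne (by decide))
        (hinj.ne (by decide)) (hinj.ne (by decide)) (hinj.ne (by decide))
        ⟨Relation.ReflTransGen.refl, Relation.ReflTransGen.refl⟩
        ⟨((Relation.ReflTransGen.single e12).trans (Relation.ReflTransGen.single e23)).trans
            (Relation.ReflTransGen.single e30), Relation.ReflTransGen.single e01⟩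
        ⟨(Relation.ReflTransGen.single e23).trans (Relation.ReflTransGen.single e30),
          (Relation.ReflTransGen.single e01).trans (Relation.ReflTransGen.single e12)⟩
        ⟨Relation.ReflTransGen.single e30,
          ((Relation.ReflTransGen.single e01).trans (Relation.ReflTransGen.single e12)).trans
            (Relation.ReflTransGen.single e23)⟩
    · intro k hk
      rintro ⟨f, hinj, hf⟩
      have hk0 : 0 < k := by omega
      have hstep : ∀ m : ℕ, D (f ⟨m % k, Nat.mod_lt m hk0⟩)
          (f ⟨(m + 1) % k, Nat.mod_lt (m + 1) hk0⟩) := by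
        intro m
        have h : (((m + 1) % k : ℕ)) = ((m % k) + 1) % k := (Nat.mod_add_mod m k 1).symm
        exact hf ⟨m % k, Nat.mod_lt m hk0⟩ ⟨(m + 1) % k, Nat.mod_lt (m + 1) hk0⟩ h
      have hmono : ∀ i j : ℕ, i ≤ j →
          Relation.ReflTransGen D (f ⟨i % k, Nat.mod_lt i hk0⟩) (f ⟨j % k, Nat.mod_lt j hk0⟩) := by
        intro i j hij
        induction j, hij using Nat.le_induction with
        | base => exact Relation.ReflTransGen.refl
        | succ j hj ih => exact ih.tail (hstep j)
      have hmem : ∀ (m : ℕ) (hm : m < k),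
          Relation.ReflTransGen D (f ⟨m, hm⟩) (f ⟨0, hk0⟩) ∧
          Relation.ReflTransGen D (f ⟨0, hk0⟩) (f ⟨m, hm⟩) := by
        intro m hm
        have h1 : f ⟨m, hm⟩ = f ⟨m % k, Nat.mod_lt m hk0⟩ :=
          congrArg f (Fin.ext (Nat.mod_eq_of_lt hm).symm)
        have h0 : f ⟨0, hk0⟩ = f ⟨0 % k, Nat.mod_lt 0 hk0⟩ :=
          congrArg f (Fin.ext (Nat.zero_mod k).symm)
        have hkk : f ⟨k % k, Nat.mod_lt k hk0⟩ = f ⟨0, hk0⟩ :=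
          congrArg f (Fin.ext (Nat.mod_self k))
        constructor
        · rw [h1, ← hkk]
          exact hmono m k (le_of_lt hm)
        · rw [h0, h1]
          exact hmono 0 m (Nat.zero_le m)
      have hne : ∀ (i j : ℕ) (hi : i < k) (hj : j < k), i ≠ j → f ⟨i, hi⟩ ≠ f ⟨j, hj⟩ :=
        fun i j hi hj hij h => hij (congrArg Fin.val (hinj h))
      exact hfour (f ⟨0, hk0⟩) (f ⟨0, hk0⟩) (f ⟨1, by omega⟩) (f ⟨2, by omega⟩) (f ⟨3, by omega⟩)
        (hne 0 1 _ _ (by omega)) (hne 0 2 _ _ (by omega)) (hne 0 3 _ _ (by omega))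
        (hne 1 2 _ _ (by omega)) (hne 1 3 _ _ (by omega)) (hne 2 3 _ _ (by omega))
        ⟨Relation.ReflTransGen.refl, Relation.ReflTransGen.refl⟩
        (hmem 1 (by omega)) (hmem 2 (by omega)) (hmem 3 (by omega))
  · intro hff
    by_contra hss
    exact hff.2.2.1 (auxRev hloop hclosed hstar hss)
end
end
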